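/- arXiv:1004.1042 — 9 statements merged into one kernel-verified Lean document; each statement's English description precedes it below -/
import Mathlib

section
/- Define the sequence (Z_i) by Z_i = 1 for i ≤ 0, Z_i = 1 + σ_1 + ... + σ_i for 1 ≤ i ≤ β+1, and Z_i = Z_{i-1} + σ_i Z_{i-β-1} for i ≥ β+2, where σ_i = α(1+α)^{min(i-1, β, n-i, n-β-1)} for a fixed α > 0. Then Z_i = (1+α)^i for all 1 ≤ i ≤ n - β. -/
/-- With fair activation rates σ_i = α(1+α)^{min(i-1, β, n-i, n-β-1)},
the normalization constants satisfy Z_i = (1+α)^i for 1 ≤ i ≤ n - β. -/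
theorem stmt0 (n β : ℕ) (hn : 1 ≤ n) (hβ : β ≤ n - 1) (α : ℝ) (hα : 0 < α)
    (σ : ℕ → ℝ)
    (hσ : ∀ i, σ i = α * (1 + α) ^ (min (i - 1) (min β (min (n - i) (n - β - 1)))))
    (Z : ℤ → ℝ)
    (hZ0 : ∀ i : ℤ, i ≤ 0 → Z i = 1)
    (hZsmall : ∀ i : ℕ, 1 ≤ i → i ≤ β + 1 → Z i = 1 + ∑ j ∈ Finset.Icc 1 i, σ j)
    (hZlarge : ∀ i : ℕ, β + 2 ≤ i → Z i = Z (i - 1) + σ i * Z ((i : ℤ) - β - 1)) :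
    ∀ i : ℕ, 1 ≤ i → i ≤ n - β → Z i = (1 + α) ^ i := by
  intro i
  induction i using Nat.strong_induction_on with
  | _ i ih =>
    intro hi1 hi2
    by_cases h : i ≤ β + 1
    · rw [hZsmall i hi1 h]
      have hsum : ∑ j ∈ Finset.Icc 1 i, σ j = ∑ k ∈ Finset.range i, α * (1 + α) ^ k := by
        rw [← Finset.Ico_add_one_right_eq_Icc, Finset.sum_Ico_eq_sum_range]
        simp only [Nat.add_sub_cancel, Nat.succ_sub_one]
        apply Finset.sum_congr rfl
        intro k hk
        rw [Finset.mem_range] at hk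
        rw [hσ]
        rw [show min (1 + k - 1) (min β (min (n - (1 + k)) (n - β - 1))) = k from by omega]
      rw [hsum, ← Finset.mul_sum]
      have hg := geom_sum_mul (1 + α) i
      have : (1 + α - 1) = α := by ring
      rw [this] at hg
      rw [mul_comm α]
      linarith [hg]
    · push_neg at h
      have hβ2 : β + 2 ≤ i := h
      rw [hZlarge i hβ2]
      have e1 : (i : ℤ) - 1 = ((i - 1 : ℕ) : ℤ) := by omega
      have e2 : (i : ℤ) - β - 1 = ((i - β - 1 : ℕ) : ℤ) := by omega
      rw [e1, e2, ih (i - 1) (by omega) (by omega) (by omega),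
        ih (i - β - 1) (by omega) (by omega) (by omega), hσ i]
      have hmin : min (i - 1) (min β (min (n - i) (n - β - 1))) = β := by omega
      rw [hmin]
      have h1 : (1 + α) ^ β * (1 + α) ^ (i - β - 1) = (1 + α) ^ (i - 1) := by
        rw [← pow_add]; congr 1; omega
      have h2 : (1 + α) ^ (i - 1) * (1 + α) = (1 + α) ^ i := by
        rw [← pow_succ]; congr 1; omega
      calc (1 + α) ^ (i - 1) + α * (1 + α) ^ β * (1 + α) ^ (i - β - 1)
          = (1 + α) ^ (i - 1) + α * ((1 + α) ^ β * (1 + α) ^ (i - β - 1)) := by ring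
        _ = (1 + α) ^ (i - 1) * (1 + α) := by rw [h1]; ring
        _ = (1 + α) ^ i := h2
end

section
/- In the linear CSMA network with n nodes, β-hop blocking, and fair activation rates σ_i = α(1+α)^{γ(i)-γ(1)}, the stationary throughput of every node i equals α/(1 + (β+1)α). Here the throughput of node i is θ_i = Z_n^{-1} Σ_{ω feasible, ω_i = 1} Π_j σ_j^{ω_j}, where a state ω ∈ {0,1}^n is feasible if ω_i ω_k = 0 whenever 1 ≤ |i-k| ≤ β, and Z_n = Σ_{ω feasible} Π_j σ_j^{ω_j}. -/
/-! Write `P(s)` for the partition function of a node set `s`. Conditioning on whether a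
node `a` is active gives `P(s ∪ {a}) = P(s) + σ_a P(s ∖ N(a))`, where `N(a)` is the
β-neighbourhood of `a`, and `P` is multiplicative over node sets lying more than β apart.
For the fair rates this recursion gives `P = (1 + α)^k` on every prefix of length
`k ≤ n - β - 1`, hence by reflection on every such suffix, while each of the last β + 1 nodes
adds `α (1 + α)^(n - β - 1)`; so `Z = (1 + (β + 1) α) (1 + α)^(n - β - 1)`. The states in
which `v` is active factor as `σ_v` times the partition functions of the prefix and the
suffix outside `N(v)`, and these multiply to `α (1 + α)^(n - β - 1)`. -/

open Finset

/-- A state (set of active nodes, 0-indexed) is feasible if no two distinct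
active nodes are within distance β of each other. -/
def Feasible (n β : ℕ) (S : Finset (Fin n)) : Prop :=
  ∀ i ∈ S, ∀ j ∈ S, i ≠ j → β < ((i : ℤ) - (j : ℤ)).natAbs

instance (n β : ℕ) : DecidablePred (Feasible n β) := fun S =>
  inferInstanceAs (Decidable (∀ i ∈ S, ∀ j ∈ S, i ≠ j → β < ((i : ℤ) - (j : ℤ)).natAbs))

/-- Product-form weight of a state. -/
def weight {n : ℕ} (σ : Fin n → ℝ) (S : Finset (Fin n)) : ℝ := ∏ i ∈ S, σ i

abbrev Apart (β i j : ℕ) : Prop := β < ((i : ℤ) - (j : ℤ)).natAbs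

instance (β : ℕ) : Std.Symm (Apart β) := ⟨fun i j h => by omega⟩

def IsSpread (β : ℕ) (S : Finset ℕ) : Prop := (S : Set ℕ).Pairwise (Apart β)

instance (β : ℕ) : DecidablePred (IsSpread β) := fun S =>
  inferInstanceAs (Decidable ((S : Set ℕ).Pairwise (Apart β)))

section PartitionFunction

variable {R : Type*} [CommSemiring R] (β : ℕ) (f : ℕ → R)

def partitionFn (s : Finset ℕ) : R := ∑ S ∈ s.powerset.filter (IsSpread β), ∏ i ∈ S, f i

variable {β}

lemma isSpread_insert {a : ℕ} {S : Finset ℕ} (ha : a ∉ S) :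
    IsSpread β (insert a S) ↔ IsSpread β S ∧ ∀ j ∈ S, Apart β a j := by
  rw [IsSpread, coe_insert, Set.pairwise_insert_of_symm_of_notMem (mem_coe.not.2 ha)]
  rfl

@[simp]
lemma partitionFn_empty : partitionFn β f ∅ = 1 := by
  have : IsSpread β ∅ := by simp [IsSpread]
  simp [partitionFn, filter_singleton, this]

lemma sum_powerset_isSpread_insert {a : ℕ} {s : Finset ℕ} (ha : a ∉ s) :
    ∑ T ∈ s.powerset, (if IsSpread β (insert a T) then ∏ i ∈ insert a T, f i else 0)
      = f a * partitionFn β f (s.filter (Apart β a)) := by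
  have haT {T : Finset ℕ} (hT : T ⊆ s) : a ∉ T := fun h => ha (hT h)
  rw [partitionFn, sum_filter, mul_sum]
  calc _ = ∑ T ∈ (s.filter (Apart β a)).powerset,
        (if IsSpread β (insert a T) then ∏ i ∈ insert a T, f i else 0) := by
        refine (sum_subset (powerset_mono.2 (filter_subset _ s)) fun T hT hT' => ?_).symm
        obtain ⟨j, hjT, hj⟩ := not_subset.1 (mt mem_powerset.2 hT')
        have hj' : ¬Apart β a j := fun h => hj (mem_filter.2 ⟨mem_powerset.1 hT hjT, h⟩)
        rw [if_neg fun h => hj' ((isSpread_insert (haT (mem_powerset.1 hT))).1 h |>.2 j hjT)]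
    _ = _ := sum_congr rfl fun T hT => by
        have hTs : T ⊆ s := (mem_powerset.1 hT).trans (filter_subset _ s)
        have hapart : ∀ j ∈ T, Apart β a j := fun j hj =>
          (mem_filter.1 (mem_powerset.1 hT hj)).2
        simp only [isSpread_insert (haT hTs), and_iff_left hapart, prod_insert (haT hTs), mul_ite,
          mul_zero]

lemma partitionFn_insert {a : ℕ} {s : Finset ℕ} (ha : a ∉ s) :
    partitionFn β f (insert a s)
      = partitionFn β f s + f a * partitionFn β f (s.filter (Apart β a)) := by
  rw [partitionFn, sum_filter, sum_powerset_insert ha, ← sum_filter,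
    sum_powerset_isSpread_insert f ha]
  rfl

lemma sum_isSpread_mem {a : ℕ} {s : Finset ℕ} (ha : a ∈ s) :
    ∑ S ∈ s.powerset.filter (fun S => IsSpread β S ∧ a ∈ S), ∏ i ∈ S, f i
      = f a * partitionFn β f (s.filter (Apart β a)) := by
  have hfilter : (s.erase a).filter (Apart β a) = s.filter (Apart β a) := by
    rw [filter_erase, erase_eq_of_notMem (by simp)]
  conv_lhs => rw [← insert_erase ha]
  rw [sum_filter, sum_powerset_insert (notMem_erase a s), ← hfilter,
    ← sum_powerset_isSpread_insert f (notMem_erase a s)]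
  have hzero : ∀ T ∈ (s.erase a).powerset,
      (if IsSpread β T ∧ a ∈ T then ∏ i ∈ T, f i else 0) = 0 := fun T hT =>
    if_neg fun h => notMem_erase a s (mem_powerset.1 hT h.2)
  simp only [sum_eq_zero hzero, mem_insert_self, and_true, zero_add]

lemma partitionFn_union {s t : Finset ℕ} (h : ∀ i ∈ s, ∀ j ∈ t, Apart β i j) :
    partitionFn β f (s ∪ t) = partitionFn β f s * partitionFn β f t := by
  induction t using Finset.strongInduction with
  | H t ih =>
  rcases t.eq_empty_or_nonempty with rfl | ⟨a, hat⟩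
  · simp
  set t' := t.erase a
  have hsub : t' ⊂ t := erase_ssubset hat
  have has : a ∉ s := fun has => by simpa using h a has a hat
  have hfar : (s ∪ t').filter (Apart β a) = s ∪ t'.filter (Apart β a) := by
    rw [filter_union, filter_true_of_mem fun i hi => Std.Symm.symm _ _ (h i hi a hat)]
  have ih' (u : Finset ℕ) (hu : u ⊆ t') :
      partitionFn β f (s ∪ u) = partitionFn β f s * partitionFn β f u :=
    ih u (hu.trans_ssubset hsub) fun i hi j hj => h i hi j (hsub.subset (hu hj))
  rw [← insert_erase hat, union_insert, partitionFn_insert f (by simp [has]), hfar,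
    partitionFn_insert f (notMem_erase a t), ih' t' le_rfl, ih' _ (filter_subset _ t')]
  ring

lemma partitionFn_image {g : ℕ → ℕ} {s : Finset ℕ}
    (hg : ∀ i ∈ s, ∀ j ∈ s, ((g i : ℤ) - g j).natAbs = ((i : ℤ) - j).natAbs) :
    partitionFn β f (s.image g) = partitionFn β (f ∘ g) s := by
  have hinj : Set.InjOn g s := fun i hi j hj hij => by
    have := hg i hi j hj
    rw [hij] at this
    omega
  rw [partitionFn, powerset_image, filter_image,
    sum_image ((image_injOn_powerset_of_injOn hinj).mono (filter_subset _ _)), partitionFn]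
  refine sum_congr (filter_congr fun T hT => ?_) fun T hT => ?_
  · have hTs := mem_powerset.1 hT
    rw [IsSpread, IsSpread, coe_image, (hinj.mono (coe_subset.2 hTs)).pairwise_image]
    refine forall₂_congr fun i hi => forall₂_congr fun j hj => ?_
    simp only [Function.onFun, Apart, hg i (hTs hi) j (hTs hj)]
  · have hTs := mem_powerset.1 (mem_filter.1 hT).1
    rw [prod_image (hinj.mono (coe_subset.2 hTs)), Function.comp_def]

lemma partitionFn_range_succ (k : ℕ) :
    partitionFn β f (range (k + 1))
      = partitionFn β f (range k) + f k * partitionFn β f (range (k - β)) := by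
  have hfar : (range k).filter (Apart β k) = range (k - β) := by
    ext j
    simp only [mem_filter, mem_range, Apart]
    omega
  rw [range_add_one, partitionFn_insert f notMem_range_self, hfar]

lemma partitionFn_range_eq_pow {α : R} {k : ℕ} (hf : ∀ j < k, f j = α * (1 + α) ^ min j β) :
    partitionFn β f (range k) = (1 + α) ^ k := by
  induction k using Nat.strong_induction_on with
  | _ k ih =>
  cases k with
  | zero => simp
  | succ k =>
    rw [partitionFn_range_succ, ih k (by omega) fun j hj => hf j (by omega),
      ih (k - β) (by omega) fun j hj => hf j (by omega), hf k (by omega), mul_assoc, ← pow_add,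
      show min k β + (k - β) = k by omega]
    ring

end PartitionFunction

-- `γ(j + 1) - γ(1)` for the node `j` of `{0, …, n - 1}`, i.e. the paper's node `j + 1`.
def fairExponent (n β j : ℕ) : ℕ := min j (min β (min (n - 1 - j) (n - β - 1)))

def fairRate {R : Type*} [CommSemiring R] (n β : ℕ) (α : R) (j : ℕ) : R :=
  α * (1 + α) ^ fairExponent n β j

section FairRate

variable {R : Type*} [CommSemiring R] {n β : ℕ} (α : R)

lemma partitionFn_fairRate_range {k : ℕ} (hk : k ≤ n - β - 1) :
    partitionFn β (fairRate n β α) (range k) = (1 + α) ^ k :=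
  partitionFn_range_eq_pow _ fun j hj => by
    rw [fairRate, fairExponent,
      show min j (min β (min (n - 1 - j) (n - β - 1))) = min j β by omega]

lemma partitionFn_fairRate_Ico {a : ℕ} (ha : β < a) :
    partitionFn β (fairRate n β α) (Ico a n) = (1 + α) ^ (n - a) := by
  have hreflect : Ico a n = (range (n - a)).image (n - 1 - ·) := by
    ext x
    simp only [mem_Ico, mem_image, mem_range]
    exact ⟨fun hx => ⟨n - 1 - x, by omega, by omega⟩, fun ⟨j, hj, hjx⟩ => by omega⟩
  rw [hreflect, partitionFn_image _ fun i hi j hj => by simp only [mem_range] at hi hj; omega]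
  refine partitionFn_range_eq_pow _ fun j hj => ?_
  rw [Function.comp_apply, fairRate, fairExponent,
    show min (n - 1 - j) (min β (min (n - 1 - (n - 1 - j)) (n - β - 1))) = min j β by omega]

lemma partitionFn_fairRate_plateau {t : ℕ} (ht : t ≤ β + 1) :
    partitionFn β (fairRate n β α) (range (n - β - 1 + t))
      = (1 + t * α) * (1 + α) ^ (n - β - 1) := by
  induction t with
  | zero => simp [partitionFn_fairRate_range α le_rfl]
  | succ t ih =>
    rw [← add_assoc, partitionFn_range_succ, ih (by omega),
      partitionFn_fairRate_range α (by omega), fairRate, mul_assoc, ← pow_add,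
      show fairExponent n β (n - β - 1 + t) + (n - β - 1 + t - β) = n - β - 1 by
        simp only [fairExponent]; omega]
    push_cast
    ring

lemma partitionFn_fairRate_range_self (hβ : β < n) :
    partitionFn β (fairRate n β α) (range n)
      = (1 + (β + 1) * α) * (1 + α) ^ (n - β - 1) := by
  have hplateau := partitionFn_fairRate_plateau (n := n) α (le_refl (β + 1))
  rw [show n - β - 1 + (β + 1) = n by omega] at hplateau
  rw [hplateau, Nat.cast_succ]

lemma sum_isSpread_mem_fairRate {v : ℕ} (hv : v < n) :
    ∑ S ∈ (range n).powerset.filter (fun S => IsSpread β S ∧ v ∈ S),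
        ∏ i ∈ S, fairRate n β α i = α * (1 + α) ^ (n - β - 1) := by
  have hsplit : (range n).filter (Apart β v) = range (v - β) ∪ Ico (v + β + 1) n := by
    ext j
    simp only [mem_filter, mem_range, mem_union, mem_Ico, Apart]
    omega
  have hapart : ∀ i ∈ range (v - β), ∀ j ∈ Ico (v + β + 1) n, Apart β i j := by
    simp only [mem_range, mem_Ico]
    omega
  rw [sum_isSpread_mem _ (mem_range.2 hv), hsplit, partitionFn_union _ hapart,
    partitionFn_fairRate_range α (by omega), partitionFn_fairRate_Ico α (by omega), fairRate,
    mul_assoc, ← pow_add, ← pow_add,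
    show fairExponent n β v + (v - β + (n - (v + β + 1))) = n - β - 1 by
      simp only [fairExponent]; omega]

end FairRate

lemma sum_filter_fin_eq_sum_range {R : Type*} [CommSemiring R] {n : ℕ} (f : ℕ → R)
    (p : Finset ℕ → Prop) [DecidablePred p] (q : Finset (Fin n) → Prop) [DecidablePred q]
    (hpq : ∀ S, q S ↔ p (S.image Fin.val)) :
    ∑ S ∈ univ.filter q, ∏ i ∈ S, f i
      = ∑ T ∈ (range n).powerset.filter p, ∏ i ∈ T, f i := by
  rw [← image_fin_univ, powerset_image, filter_image, powerset_univ,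
    sum_image (image_injective Fin.val_injective).injOn]
  refine sum_congr (filter_congr fun S _ => hpq S) fun S _ => ?_
  rw [prod_image Fin.val_injective.injOn]

lemma feasible_iff_isSpread {n β : ℕ} (S : Finset (Fin n)) :
    Feasible n β S ↔ IsSpread β (S.image Fin.val) := by
  rw [IsSpread, coe_image, Fin.val_injective.injOn.pairwise_image]
  rfl

theorem stmt1_general (n β : ℕ) (hβ : β ≤ n - 1) (α : ℝ) (hα : 0 < α)
    (σ : Fin n → ℝ)
    (hσ : ∀ v : Fin n,
      σ v = α * (1 + α) ^ (min (v : ℕ) (min β (min (n - 1 - (v : ℕ)) (n - β - 1)))))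
    (Z : ℝ)
    (hZ : Z = ∑ S ∈ univ.filter (Feasible n β), weight σ S) :
    ∀ v : Fin n,
      (∑ S ∈ univ.filter (fun S => Feasible n β S ∧ v ∈ S), weight σ S) / Z
        = α / (1 + (β + 1) * α) := by
  intro v
  have hweight (S : Finset (Fin n)) : weight σ S = ∏ i ∈ S, fairRate n β α i :=
    prod_congr rfl fun i _ => hσ i
  have hZ' : Z = (1 + (β + 1) * α) * (1 + α) ^ (n - β - 1) := by
    rw [hZ, sum_congr rfl fun S _ => hweight S,
      sum_filter_fin_eq_sum_range _ (IsSpread β) _ feasible_iff_isSpread]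
    exact partitionFn_fairRate_range_self α (Nat.lt_of_le_pred v.pos hβ)
  have hnum : ∑ S ∈ univ.filter (fun S => Feasible n β S ∧ v ∈ S), weight σ S
      = α * (1 + α) ^ (n - β - 1) := by
    rw [sum_congr rfl fun S _ => hweight S,
      sum_filter_fin_eq_sum_range _ (fun T => IsSpread β T ∧ (v : ℕ) ∈ T) _ fun S => by
        rw [feasible_iff_isSpread, Fin.val_injective.mem_finset_image]]
    exact sum_isSpread_mem_fairRate α v.isLt
  rw [hnum, hZ', mul_div_mul_right _ _ (pow_ne_zero _ (by positivity))]

/-- with fair rates σ_i = α(1+α)^{γ(i)-γ(1)}, where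
γ(i)-γ(1) = min(i-1, β, n-i, n-β-1) (here nodes are 0-indexed, so node v+1 has
exponent min(v, β, n-1-v, n-β-1)), every node has throughput α/(1+(β+1)α). -/
theorem stmt1 (n β : ℕ) (hn : 1 ≤ n) (hβ : β ≤ n - 1) (α : ℝ) (hα : 0 < α)
    (σ : Fin n → ℝ)
    (hσ : ∀ v : Fin n,
      σ v = α * (1 + α) ^ (min (v : ℕ) (min β (min (n - 1 - (v : ℕ)) (n - β - 1)))))
    (Z : ℝ)
    (hZ : Z = ∑ S ∈ univ.filter (Feasible n β), weight σ S) :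
    ∀ v : Fin n,
      (∑ S ∈ univ.filter (fun S => Feasible n β S ∧ v ∈ S), weight σ S) / Z
        = α / (1 + (β + 1) * α) :=
  stmt1_general n β hβ α hα σ hσ Z hZ
end

section
/- For a linear network with n ≥ 3 nodes and blocking range β = n-2, setting σ_1 = σ_n = α and σ_i = α(1+α) for 2 ≤ i ≤ n-1 yields equal throughputs θ_i = α/(1+(n-1)α) for all i, where θ_i = Z_n^{-1} Σ_{ω feasible, ω_i=1} Π_j σ_j^{ω_j}. -/
open Finset

/-!
With β = n - 2 two distinct active nodes are compatible only if they are the two end nodes, so the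
feasible states are the empty state, the n singletons and the pair of end nodes. Hence
Z = 1 + α² + Σ σ_i = (1 + α)(1 + (n - 1)α), while the states containing a node v have total weight
σ_v + α² = α(1 + α) if v is an end node and σ_v = α(1 + α) otherwise.
-/

def endpoints (n : ℕ) : Finset (Fin n) := {i | (i : ℕ) = 0 ∨ (i : ℕ) = n - 1}

lemma mem_endpoints {n : ℕ} {i : Fin n} : i ∈ endpoints n ↔ (i : ℕ) = 0 ∨ (i : ℕ) = n - 1 := by
  simp [endpoints]

lemma card_endpoints {n : ℕ} (hn : 2 ≤ n) : #(endpoints n) = 2 := by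
  have : endpoints n = {⟨0, by omega⟩, ⟨n - 1, by omega⟩} := by
    ext i
    simp [mem_endpoints, Fin.ext_iff]
  rw [this, card_pair]
  simp [Fin.ext_iff]
  omega

@[simp] lemma weight_empty {n : ℕ} (σ : Fin n → ℝ) : weight σ ∅ = 1 := prod_empty

@[simp] lemma weight_singleton {n : ℕ} (σ : Fin n → ℝ) (i : Fin n) : weight σ {i} = σ i :=
  prod_singleton σ i

lemma feasible_sub_two_iff {n : ℕ} (S : Finset (Fin n)) :
    Feasible n (n - 2) S ↔ #S ≤ 1 ∨ S ⊆ endpoints n := by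
  constructor
  · intro hS
    by_contra! ⟨hcard, hsub⟩
    obtain ⟨k, hk, hk_end⟩ := not_subset.mp hsub
    obtain ⟨j, hj, hjk⟩ := exists_mem_ne hcard k
    have hdist := hS k hk j hj hjk.symm
    rw [mem_endpoints] at hk_end
    omega
  · rintro (hS | hS) i hi j hj hij
    · exact absurd (card_le_one.mp hS i hi j hj) hij
    · have hi' := mem_endpoints.mp (hS hi)
      have hj' := mem_endpoints.mp (hS hj)
      have hij' : (i : ℕ) ≠ j := Fin.val_ne_of_ne hij
      omega

lemma filter_feasible_sub_two {n : ℕ} (hn : 2 ≤ n) :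
    univ.filter (Feasible n (n - 2)) =
      insert ∅ (insert (endpoints n) (univ.map ⟨singleton, singleton_injective⟩)) := by
  ext S
  simp only [mem_filter, mem_univ, true_and, feasible_sub_two_iff, mem_insert, mem_map,
    Function.Embedding.coeFn_mk]
  constructor
  · intro hS
    by_cases hcard : #S ≤ 1
    · rcases Nat.le_one_iff_eq_zero_or_eq_one.mp hcard with hcard | hcard
      · exact .inl (card_eq_zero.mp hcard)
      · obtain ⟨i, rfl⟩ := card_eq_one.mp hcard
        exact .inr (.inr ⟨i, rfl⟩)
    · refine .inr (.inl (eq_of_subset_of_card_le (hS.resolve_left hcard) ?_))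
      rw [card_endpoints hn]
      omega
  · rintro (rfl | rfl | ⟨i, rfl⟩)
    · simp
    · exact .inr subset_rfl
    · simp

lemma sum_feasible_sub_two {M : Type*} [AddCommMonoid M] {n : ℕ} (hn : 2 ≤ n)
    (f : Finset (Fin n) → M) :
    ∑ S ∈ univ.filter (Feasible n (n - 2)), f S = f ∅ + f (endpoints n) + ∑ i, f {i} := by
  have hcard := card_endpoints hn
  rw [filter_feasible_sub_two hn, sum_insert, sum_insert, sum_map, add_assoc]
  · rfl
  · simp only [mem_map, mem_univ, true_and, Function.Embedding.coeFn_mk, not_exists]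
    rintro i h
    simp [← h] at hcard
  · simp only [mem_insert, mem_map, mem_univ, true_and, Function.Embedding.coeFn_mk, not_or,
      not_exists]
    exact ⟨fun h => by simp [← h] at hcard, singleton_ne_empty⟩

/-- for β = n-2, setting σ_1 = σ_n = α and σ_i = α(1+α) for the
interior nodes yields equal throughputs α/(1+(n-1)α). -/
theorem stmt2 (n : ℕ) (hn : 3 ≤ n) (α : ℝ) (hα : 0 < α)
    (σ : Fin n → ℝ)
    (hσ : ∀ v : Fin n,
      σ v = if (v : ℕ) = 0 ∨ (v : ℕ) = n - 1 then α else α * (1 + α))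
    (Z : ℝ)
    (hZ : Z = ∑ S ∈ univ.filter (Feasible n (n - 2)), weight σ S) :
    ∀ v : Fin n,
      (∑ S ∈ univ.filter (fun S => Feasible n (n - 2) S ∧ v ∈ S), weight σ S) / Z
        = α / (1 + (n - 1) * α) := by
  simp only [← mem_endpoints] at hσ
  have hcard := card_endpoints (n := n) (by omega)
  have hσ_end : weight σ (endpoints n) = α ^ 2 := by
    rw [weight, prod_congr rfl fun i hi => (hσ i).trans (if_pos hi), prod_const, hcard]
  have hσ_sum : ∑ i, σ i = 2 * α + (n - 2) * (α * (1 + α)) := by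
    rw [← sum_add_sum_compl (endpoints n), sum_congr rfl fun i hi => (hσ i).trans (if_pos hi),
      sum_congr rfl fun i hi => (hσ i).trans (if_neg (mem_compl.mp hi)), sum_const, sum_const,
      card_compl, hcard, Fintype.card_fin, nsmul_eq_mul, nsmul_eq_mul, Nat.cast_sub (by omega)]
    push_cast
    ring
  have hZ' : Z = (1 + α) * (1 + (n - 1) * α) := by
    rw [hZ, sum_feasible_sub_two (by omega), hσ_end]
    simp only [weight_empty, weight_singleton, hσ_sum]
    ring
  intro v
  have hnum : ∑ S ∈ univ.filter (fun S => Feasible n (n - 2) S ∧ v ∈ S), weight σ S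
      = α * (1 + α) := by
    rw [← filter_filter, sum_filter, sum_feasible_sub_two (by omega)]
    simp only [notMem_empty, if_false, zero_add, mem_singleton, sum_ite_eq, mem_univ, if_true]
    rw [hσ_end, weight_singleton, hσ v]
    split_ifs <;> ring
  rw [hnum, hZ', mul_comm (1 + α), mul_div_mul_right _ _ (by positivity)]
end

section
/- For a linear network with n = 2m nodes (m ≥ 1) and blocking range β = m-1, setting σ_i = α(1+α)^{i-1} for i = 1,...,m and σ_i = σ_{n+1-i} for i = m+1,...,n yields equal throughputs θ_i = α/(1+mα) for all i. -/
open Finset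

/- ### Auxiliary lemmas -/

lemma fin_cast (m : ℕ) (a : Fin m) : ((a : ℤ)) = ((a : ℕ) : ℤ) := rfl

lemma L2 (α : ℝ) (m c : ℕ) (hc : c ≤ m) :
    ∑ j ∈ range c, α * (1+α) ^ (min j (2*m-1-j)) = (1+α)^c - 1 := by
  have h1 : ∀ j ∈ range c, α * (1+α) ^ (min j (2*m-1-j)) = α * (1+α)^j := by
    intro j hj
    simp only [mem_range] at hj
    have : min j (2*m-1-j) = j := by omega
    rw [this]
  rw [Finset.sum_congr rfl h1, ← Finset.mul_sum, mul_comm]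
  have h := geom_sum_mul (1+α) c
  rw [add_sub_cancel_left] at h
  exact h

lemma L1 (α : ℝ) (m c : ℕ) (hm : 1 ≤ m) (hc : m ≤ c) (hc2 : c ≤ 2*m) :
    ∑ j ∈ Ico c (2*m), α * (1+α) ^ (min j (2*m-1-j)) = (1+α)^(2*m-c) - 1 := by
  rw [Finset.sum_Ico_eq_sum_range]
  have h1 : ∀ k ∈ range (2*m - c), α * (1+α) ^ (min (c+k) (2*m-1-(c+k)))
      = α * (1+α) ^ ((2*m-c) - 1 - k) := by
    intro k hk
    simp only [mem_range] at hk
    have : min (c+k) (2*m-1-(c+k)) = (2*m-c) - 1 - k := by omega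
    rw [this]
  rw [Finset.sum_congr rfl h1]
  have hr := Finset.sum_range_reflect (fun k => α*(1+α)^k) (2*m - c)
  rw [hr, ← Finset.mul_sum, mul_comm]
  have h := geom_sum_mul (1+α) (2*m-c)
  rw [add_sub_cancel_left] at h
  exact h

lemma sum_filter_ge (m c : ℕ) (α : ℝ) (hm : 1 ≤ m) (hc : m ≤ c) (hc2 : c ≤ 2*m)
    (σ : Fin (2*m) → ℝ)
    (hσ : ∀ v : Fin (2*m), σ v = α * (1 + α) ^ (min (v : ℕ) (2 * m - 1 - (v : ℕ)))) :
    ∑ j ∈ univ.filter (fun j : Fin (2*m) => c ≤ (j:ℕ)), σ j = (1+α)^(2*m-c) - 1 := by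
  have h0 : ∑ j ∈ univ.filter (fun j : Fin (2*m) => c ≤ (j:ℕ)), σ j
      = ∑ j : Fin (2*m),
          (fun t : ℕ => if c ≤ t then α * (1+α) ^ (min t (2*m-1-t)) else 0) (j:ℕ) := by
    rw [Finset.sum_filter]
    refine Finset.sum_congr rfl fun j _ => ?_
    by_cases h : c ≤ (j:ℕ) <;> simp [h, hσ j]
  rw [h0, Fin.sum_univ_eq_sum_range (fun t : ℕ => if c ≤ t then α * (1+α) ^ (min t (2*m-1-t)) else 0) (2*m),
    ← Finset.sum_filter]
  have h1 : (range (2*m)).filter (fun t => c ≤ t) = Ico c (2*m) := by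
    ext t; simp only [mem_filter, mem_range, mem_Ico]; omega
  rw [h1]
  exact L1 α m c hm hc hc2

lemma sum_filter_lt (m c : ℕ) (α : ℝ) (hc : c ≤ m)
    (σ : Fin (2*m) → ℝ)
    (hσ : ∀ v : Fin (2*m), σ v = α * (1 + α) ^ (min (v : ℕ) (2 * m - 1 - (v : ℕ)))) :
    ∑ j ∈ univ.filter (fun j : Fin (2*m) => (j:ℕ) < c), σ j = (1+α)^c - 1 := by
  have h0 : ∑ j ∈ univ.filter (fun j : Fin (2*m) => (j:ℕ) < c), σ j
      = ∑ j : Fin (2*m),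
          (fun t : ℕ => if t < c then α * (1+α) ^ (min t (2*m-1-t)) else 0) (j:ℕ) := by
    rw [Finset.sum_filter]
    refine Finset.sum_congr rfl fun j _ => ?_
    by_cases h : (j:ℕ) < c <;> simp [h, hσ j]
  rw [h0, Fin.sum_univ_eq_sum_range (fun t : ℕ => if t < c then α * (1+α) ^ (min t (2*m-1-t)) else 0) (2*m),
    ← Finset.sum_filter]
  have h1 : (range (2*m)).filter (fun t => t < c) = range c := by
    ext t; simp only [mem_filter, mem_range]; omega
  rw [h1]
  exact L2 α m c hc

lemma sum_all (m : ℕ) (hm : 1 ≤ m) (α : ℝ)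
    (σ : Fin (2*m) → ℝ)
    (hσ : ∀ v : Fin (2*m), σ v = α * (1 + α) ^ (min (v : ℕ) (2 * m - 1 - (v : ℕ)))) :
    ∑ j : Fin (2*m), σ j = 2*((1+α)^m - 1) := by
  have h0 : ∑ j : Fin (2*m), σ j = ∑ t ∈ range (2*m), α * (1+α)^(min t (2*m-1-t)) := by
    rw [← Fin.sum_univ_eq_sum_range]
    exact Finset.sum_congr rfl fun j _ => hσ j
  rw [h0, Finset.range_eq_Ico,
    ← Finset.sum_Ico_consecutive _ (Nat.zero_le m) (show m ≤ 2*m by omega),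
    ← Finset.range_eq_Ico, L2 α m m le_rfl, L1 α m m hm le_rfl (by omega)]
  have h2 : 2*m - m = m := by omega
  rw [h2]; ring

lemma feas_card_le (m : ℕ) (hm : 1 ≤ m) (S : Finset (Fin (2*m)))
    (hS : Feasible (2*m) (m-1) S) : S.card ≤ 2 := by
  by_contra h
  push_neg at h
  obtain ⟨a, ha⟩ := Finset.card_pos.mp (show 0 < S.card by omega)
  have h2 : 1 ≤ (S.erase a).card := by
    have := Finset.card_erase_of_mem ha; omega
  obtain ⟨b, hb⟩ := Finset.card_pos.mp (show 0 < (S.erase a).card by omega)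
  have h3 : 1 ≤ ((S.erase a).erase b).card := by
    have := Finset.card_erase_of_mem hb
    have := Finset.card_erase_of_mem ha
    have := Finset.card_erase_le (s := S.erase a) (a := b)
    omega
  obtain ⟨c, hc⟩ := Finset.card_pos.mp (show 0 < ((S.erase a).erase b).card by omega)
  have hcb : c ≠ b := Finset.ne_of_mem_erase hc
  have hc' : c ∈ S.erase a := Finset.mem_of_mem_erase hc
  have hca : c ≠ a := Finset.ne_of_mem_erase hc'
  have hba : b ≠ a := Finset.ne_of_mem_erase hb
  have hbS : b ∈ S := Finset.mem_of_mem_erase hb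
  have hcS : c ∈ S := Finset.mem_of_mem_erase hc'
  have e1 := hS a ha b hbS (Ne.symm hba)
  have e2 := hS a ha c hcS (Ne.symm hca)
  have e3 := hS b hbS c hcS (Ne.symm hcb)
  rw [fin_cast, fin_cast] at e1 e2 e3
  have := a.isLt; have := b.isLt; have := c.isLt
  omega

lemma num_set (m : ℕ) (hm : 1 ≤ m) (v : Fin (2*m)) :
    univ.filter (fun S => Feasible (2*m) (m-1) S ∧ v ∈ S)
      = insert {v} ((univ.filter (fun j : Fin (2*m) => m ≤ ((v:ℤ)-(j:ℤ)).natAbs)).image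
          (fun j => ({v, j} : Finset (Fin (2*m))))) := by
  ext S
  simp only [mem_filter, mem_univ, true_and, mem_insert, mem_image]
  constructor
  · rintro ⟨hf, hv⟩
    by_cases h1 : S = {v}
    · left; exact h1
    · right
      have hex : ∃ j ∈ S, j ≠ v := by
        by_contra hcon
        push_neg at hcon
        exact h1 (Finset.eq_singleton_iff_unique_mem.mpr ⟨hv, hcon⟩)
      obtain ⟨j, hj, hjv⟩ := hex
      have hdist := hf v hv j hj (Ne.symm hjv)
      refine ⟨j, by rw [fin_cast, fin_cast] at hdist ⊢; omega, ?_⟩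
      apply Finset.Subset.antisymm
      swap
      · intro k hk
        rw [mem_insert, mem_singleton]
        by_contra hkk
        push_neg at hkk
        obtain ⟨hkv, hkj⟩ := hkk
        have e1 := hf v hv j hj (Ne.symm hjv)
        have e2 := hf v hv k hk (Ne.symm hkv)
        have e3 := hf j hj k hk (Ne.symm hkj)
        rw [fin_cast, fin_cast] at e1 e2 e3
        have := v.isLt; have := j.isLt; have := k.isLt
        omega
      · intro k hk
        rw [mem_insert, mem_singleton] at hk
        rcases hk with rfl | rfl <;> assumption
  · rintro (rfl | ⟨j, hj, rfl⟩)
    · refine ⟨?_, Finset.mem_singleton_self v⟩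
      intro i hi j hj hij
      simp only [mem_singleton] at hi hj
      exact absurd (hi.trans hj.symm) hij
    · refine ⟨?_, Finset.mem_insert_self v _⟩
      intro a ha b hb hab
      simp only [mem_insert, mem_singleton] at ha hb
      rw [fin_cast, fin_cast] at hj ⊢
      rcases ha with rfl | rfl <;> rcases hb with rfl | rfl <;>
        first
          | exact absurd rfl hab
          | omega

lemma Nval (m : ℕ) (hm : 1 ≤ m) (α : ℝ)
    (σ : Fin (2*m) → ℝ)
    (hσ : ∀ v : Fin (2*m), σ v = α * (1 + α) ^ (min (v : ℕ) (2 * m - 1 - (v : ℕ))))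
    (v : Fin (2*m)) :
    ∑ S ∈ univ.filter (fun S => Feasible (2*m) (m-1) S ∧ v ∈ S), weight σ S
      = α * (1+α)^m := by
  rw [num_set m hm v]
  set C := univ.filter (fun j : Fin (2*m) => m ≤ ((v:ℤ)-(j:ℤ)).natAbs) with hC
  have hvC : ∀ j ∈ C, j ≠ v := by
    intro j hj
    rw [hC, mem_filter] at hj
    rintro rfl
    rw [sub_self] at hj
    simp at hj
    omega
  have hnot : ({v} : Finset (Fin (2*m))) ∉ C.image (fun j => ({v,j} : Finset (Fin (2*m)))) := by
    rw [mem_image]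
    rintro ⟨j, hj, heq⟩
    have hjm : j ∈ ({v} : Finset (Fin (2*m))) := by
      rw [← heq]; exact mem_insert_of_mem (mem_singleton_self j)
    rw [mem_singleton] at hjm
    exact hvC j hj hjm
  have hinj : ∀ a ∈ C, ∀ b ∈ C,
      ({v,a} : Finset (Fin (2*m))) = {v,b} → a = b := by
    intro a ha b hb hab
    have : a ∈ ({v,b} : Finset (Fin (2*m))) := by
      rw [← hab]; exact mem_insert_of_mem (mem_singleton_self a)
    rw [mem_insert, mem_singleton] at this
    rcases this with h | h
    · exact absurd h (hvC a ha)
    · exact h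
  rw [Finset.sum_insert hnot, Finset.sum_image hinj]
  have hw1 : weight σ {v} = σ v := by simp [weight]
  have hw2 : ∀ j ∈ C, weight σ {v, j} = σ v * σ j := by
    intro j hj
    rw [weight, Finset.prod_pair (Ne.symm (hvC j hj))]
  rw [hw1, Finset.sum_congr rfl hw2, ← Finset.mul_sum]
  by_cases hvm : (v:ℕ) < m
  · have hCeq : C = univ.filter (fun j : Fin (2*m) => (m + (v:ℕ)) ≤ (j:ℕ)) := by
      rw [hC]; ext j
      simp only [mem_filter, mem_univ, true_and]
      rw [fin_cast, fin_cast]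
      have := j.isLt; have := v.isLt
      omega
    rw [hCeq, sum_filter_ge m (m + (v:ℕ)) α hm (by omega) (by omega) σ hσ]
    have hσv : σ v = α * (1+α)^(v:ℕ) := by
      rw [hσ v, show min (v:ℕ) (2*m-1-(v:ℕ)) = (v:ℕ) from by omega]
    rw [hσv]
    have : α * (1 + α) ^ (v:ℕ) + α * (1 + α) ^ (v:ℕ) * ((1 + α) ^ (2 * m - (m + ↑v)) - 1)
        = α * ((1 + α) ^ (v:ℕ) * (1 + α) ^ (2 * m - (m + ↑v))) := by ring
    rw [this, ← pow_add,
      show (v:ℕ) + (2*m - (m + (v:ℕ))) = m from by omega]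
  · have hCeq : C = univ.filter (fun j : Fin (2*m) => (j:ℕ) < (v:ℕ) - m + 1) := by
      rw [hC]; ext j
      simp only [mem_filter, mem_univ, true_and]
      rw [fin_cast, fin_cast]
      have := j.isLt; have := v.isLt
      omega
    have hvlt := v.isLt
    rw [hCeq, sum_filter_lt m ((v:ℕ) - m + 1) α (by omega) σ hσ]
    have hσv : σ v = α * (1+α)^(2*m - 1 - (v:ℕ)) := by
      rw [hσ v, show min (v:ℕ) (2*m-1-(v:ℕ)) = 2*m-1-(v:ℕ) from by omega]
    rw [hσv]
    have : α * (1 + α) ^ (2*m-1-(v:ℕ)) + α * (1 + α) ^ (2*m-1-(v:ℕ)) * ((1 + α) ^ ((v:ℕ) - m + 1) - 1)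
        = α * ((1 + α) ^ (2*m-1-(v:ℕ)) * (1 + α) ^ ((v:ℕ) - m + 1)) := by ring
    rw [this, ← pow_add,
      show (2*m - 1 - (v:ℕ)) + ((v:ℕ) - m + 1) = m from by omega]

lemma Zval (m : ℕ) (hm : 1 ≤ m) (α : ℝ)
    (σ : Fin (2*m) → ℝ)
    (hσ : ∀ v : Fin (2*m), σ v = α * (1 + α) ^ (min (v : ℕ) (2 * m - 1 - (v : ℕ)))) :
    ∑ S ∈ univ.filter (Feasible (2*m) (m-1)), weight σ S = (1+α)^m * (1 + m*α) := by
  set F := univ.filter (Feasible (2*m) (m-1)) with hF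
  have hmaps : ∀ S ∈ F, S.card ∈ range 3 := by
    intro S hS
    rw [mem_range]
    have := feas_card_le m hm S (mem_filter.mp hS).2
    omega
  have hfib1 := Finset.sum_fiberwise_of_maps_to hmaps (weight σ)
  have hfib2 := Finset.sum_fiberwise_of_maps_to hmaps (fun S => (S.card : ℝ) * weight σ S)
  have hF0 : F.filter (fun S => S.card = 0) = {(∅ : Finset (Fin (2*m)))} := by
    ext S
    simp only [hF, mem_filter, mem_univ, true_and, mem_singleton, Finset.card_eq_zero]
    constructor
    · rintro ⟨_, h⟩; exact h
    · rintro rfl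
      exact ⟨fun i hi => absurd hi (Finset.notMem_empty i), rfl⟩
  have hF1 : F.filter (fun S => S.card = 1)
      = univ.image (fun w : Fin (2*m) => ({w} : Finset (Fin (2*m)))) := by
    ext S
    simp only [hF, mem_filter, mem_univ, true_and, mem_image, Finset.card_eq_one]
    constructor
    · rintro ⟨_, a, rfl⟩; exact ⟨a, rfl⟩
    · rintro ⟨a, rfl⟩
      refine ⟨?_, a, rfl⟩
      intro i hi j hj hij
      simp only [mem_singleton] at hi hj
      exact absurd (hi.trans hj.symm) hij
  have hA : ∑ S ∈ F.filter (fun S => S.card = 1), weight σ S = 2*((1+α)^m - 1) := by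
    rw [hF1, Finset.sum_image (fun a _ b _ h => Finset.singleton_injective h)]
    rw [Finset.sum_congr rfl (fun w _ => show weight σ {w} = σ w by simp [weight])]
    exact sum_all m hm α σ hσ
  set B := ∑ S ∈ F.filter (fun S => S.card = 2), weight σ S with hB
  have hw0 : weight σ (∅ : Finset (Fin (2*m))) = 1 := by simp [weight]
  have hsum1 : ∑ S ∈ F, weight σ S = 1 + 2*((1+α)^m - 1) + B := by
    rw [← hfib1, Finset.sum_range_succ, Finset.sum_range_succ, Finset.sum_range_succ,
      Finset.sum_range_zero, hF0, Finset.sum_singleton, hw0, hA]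
    ring
  have e0 : ∑ S ∈ F.filter (fun S => S.card = 0), (S.card : ℝ) * weight σ S = 0 := by
    apply Finset.sum_eq_zero
    intro S hS
    rw [(Finset.mem_filter.mp hS).2]
    norm_num
  have e1 : ∑ S ∈ F.filter (fun S => S.card = 1), (S.card : ℝ) * weight σ S
      = ∑ S ∈ F.filter (fun S => S.card = 1), weight σ S := by
    refine Finset.sum_congr rfl fun S hS => ?_
    rw [(Finset.mem_filter.mp hS).2]
    norm_num
  have e2 : ∑ S ∈ F.filter (fun S => S.card = 2), (S.card : ℝ) * weight σ S = 2 * B := by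
    rw [hB, Finset.mul_sum]
    refine Finset.sum_congr rfl fun S hS => ?_
    rw [(Finset.mem_filter.mp hS).2]
    norm_num
  have hsum2 : ∑ S ∈ F, (S.card : ℝ) * weight σ S = 2*((1+α)^m - 1) + 2*B := by
    rw [← hfib2, Finset.sum_range_succ, Finset.sum_range_succ, Finset.sum_range_succ,
      Finset.sum_range_zero, e0, e1, e2, hA]
    ring
  have hsw : ∑ v : Fin (2*m),
      (∑ S ∈ univ.filter (fun S => Feasible (2*m) (m-1) S ∧ v ∈ S), weight σ S)
      = ∑ S ∈ F, (S.card : ℝ) * weight σ S := by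
    have h1 : ∀ v : Fin (2*m),
        univ.filter (fun S => Feasible (2*m) (m-1) S ∧ v ∈ S) = F.filter (fun S => v ∈ S) := by
      intro v
      rw [hF, Finset.filter_filter]
    calc ∑ v : Fin (2*m),
          (∑ S ∈ univ.filter (fun S => Feasible (2*m) (m-1) S ∧ v ∈ S), weight σ S)
        = ∑ v : Fin (2*m), ∑ S ∈ F, if v ∈ S then weight σ S else 0 := by
          refine Finset.sum_congr rfl fun v _ => ?_
          rw [h1 v, Finset.sum_filter]
      _ = ∑ S ∈ F, ∑ v : Fin (2*m), if v ∈ S then weight σ S else 0 := Finset.sum_comm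
      _ = ∑ S ∈ F, (S.card : ℝ) * weight σ S := by
          refine Finset.sum_congr rfl fun S _ => ?_
          rw [← Finset.sum_filter]
          have : univ.filter (fun v : Fin (2*m) => v ∈ S) = S := by
            ext a; simp
          rw [this, Finset.sum_const, nsmul_eq_mul]
  have hconst : ∑ v : Fin (2*m),
      (∑ S ∈ univ.filter (fun S => Feasible (2*m) (m-1) S ∧ v ∈ S), weight σ S)
      = (2*(m:ℝ)) * (α * (1+α)^m) := by
    rw [Finset.sum_congr rfl (fun v _ => Nval m hm α σ hσ v), Finset.sum_const,
      Finset.card_univ, Fintype.card_fin, nsmul_eq_mul]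
    push_cast
    ring
  have hkey : (2*(m:ℝ)) * (α * (1+α)^m) = 2*((1+α)^m - 1) + 2*B := by
    rw [← hconst, hsw, hsum2]
  linear_combination hsum1 - hkey / 2

/-- for n = 2m nodes and β = m-1, the rates σ_i = α(1+α)^{i-1} for
i = 1,…,m, extended symmetrically (σ_i = σ_{n+1-i}), yield equal throughputs
α/(1+mα).  With 0-indexed node v, the exponent i-1 resp. n-i is min(v, n-1-v). -/
theorem stmt3 (m : ℕ) (hm : 1 ≤ m) (α : ℝ) (hα : 0 < α)
    (σ : Fin (2 * m) → ℝ)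
    (hσ : ∀ v : Fin (2 * m),
      σ v = α * (1 + α) ^ (min (v : ℕ) (2 * m - 1 - (v : ℕ))))
    (Z : ℝ)
    (hZ : Z = ∑ S ∈ univ.filter (Feasible (2 * m) (m - 1)), weight σ S) :
    ∀ v : Fin (2 * m),
      (∑ S ∈ univ.filter (fun S => Feasible (2 * m) (m - 1) S ∧ v ∈ S), weight σ S) / Z
        = α / (1 + m * α) := by
  intro v
  rw [Nval m hm α σ hσ v, hZ, Zval m hm α σ hσ]
  have hx : (0:ℝ) < 1 + α := by linarith
  have hxm : (0:ℝ) < (1+α)^m := pow_pos hx m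
  have hden : (0:ℝ) < 1 + (m:ℝ) * α := by positivity
  rw [mul_comm α ((1+α)^m), mul_div_mul_left α (1 + (m:ℝ)*α) (ne_of_gt hxm)]
end

section
/- For n = 2m, β = m-1 and σ_i = α(1+α)^{i-1} for i ≤ m (symmetric for i > m), the normalization constant equals Z_n = (1+mα)(1+α)^m, where Z_n = 1 + Σ_{i=1}^n σ_i + Σ_{i=1}^m σ_i Σ_{j=i+m}^n σ_j. -/
open Finset


lemma geo (α : ℝ) (m : ℕ) : ∑ k ∈ range m, α * (1 + α) ^ k = (1 + α) ^ m - 1 := by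
  induction m with
  | zero => simp
  | succ n ih => rw [sum_range_succ, ih]; ring

/-- for n = 2m, β = m-1 and σ_i = α(1+α)^{i-1} for i ≤ m
(symmetric for i > m, i.e. σ_i = α(1+α)^{min(i-1, 2m-i)}), the normalization
constant Z_n = 1 + Σ_{i=1}^n σ_i + Σ_{i=1}^m σ_i Σ_{j=i+m}^n σ_j equals
(1+mα)(1+α)^m. -/
theorem stmt4 (m : ℕ) (hm : 1 ≤ m) (α : ℝ) (hα : 0 < α)
    (σ : ℕ → ℝ)
    (hσ : ∀ i, σ i = α * (1 + α) ^ (min (i - 1) (2 * m - i))) :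
    1 + (∑ i ∈ Finset.Icc 1 (2 * m), σ i)
      + (∑ i ∈ Finset.Icc 1 m, σ i * ∑ j ∈ Finset.Icc (i + m) (2 * m), σ j)
      = (1 + m * α) * (1 + α) ^ m := by
  have key1 : ∑ i ∈ Finset.Icc 1 m, σ i = (1 + α) ^ m - 1 := by
    rw [← Finset.Ico_add_one_right_eq_Icc, Finset.sum_Ico_eq_sum_range, ← geo α m]
    apply Finset.sum_congr (by congr 1)
    intro k hk
    simp only [Finset.mem_range] at hk
    have he : min (1 + k - 1) (2 * m - (1 + k)) = k := by omega
    rw [hσ, he]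
  have key2 : ∑ i ∈ Finset.Icc (m+1) (2*m), σ i = (1 + α) ^ m - 1 := by
    rw [← Finset.Ico_add_one_right_eq_Icc, Finset.sum_Ico_eq_sum_range]
    have h : (2*m + 1 - (m+1)) = m := by omega
    rw [h, ← geo α m, ← Finset.sum_range_reflect (fun k => α * (1+α)^k) m]
    apply Finset.sum_congr rfl
    intro k hk
    simp only [Finset.mem_range] at hk
    have he : min (m + 1 + k - 1) (2 * m - (m + 1 + k)) = m - 1 - k := by omega
    rw [hσ, he]
  have key3 : ∀ i ∈ Finset.Icc 1 m,
      σ i * ∑ j ∈ Finset.Icc (i + m) (2 * m), σ j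
      = α * (1+α)^(i-1) * ((1 + α) ^ (m - i + 1) - 1) := by
    intro i hi
    simp only [Finset.mem_Icc] at hi
    have hinner : ∑ j ∈ Finset.Icc (i + m) (2 * m), σ j = (1 + α) ^ (m - i + 1) - 1 := by
      rw [← Finset.Ico_add_one_right_eq_Icc, Finset.sum_Ico_eq_sum_range]
      have h : (2*m + 1 - (i+m)) = m - i + 1 := by omega
      rw [h, ← geo α (m - i + 1),
        ← Finset.sum_range_reflect (fun k => α * (1+α)^k) (m - i + 1)]
      apply Finset.sum_congr rfl
      intro k hk
      simp only [Finset.mem_range] at hk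
      have he : min (i + m + k - 1) (2 * m - (i + m + k)) = m - i + 1 - 1 - k := by omega
      rw [hσ, he]
    have he : min (i - 1) (2 * m - i) = i - 1 := by omega
    rw [hinner, hσ, he]
  have key4 : ∑ i ∈ Finset.Icc 1 m, σ i * ∑ j ∈ Finset.Icc (i + m) (2 * m), σ j
      = m * (α * (1+α)^m) - ((1 + α) ^ m - 1) := by
    rw [Finset.sum_congr rfl key3, ← Finset.Ico_add_one_right_eq_Icc, Finset.sum_Ico_eq_sum_range]
    have h2 : ∀ k ∈ range (m + 1 - 1), α * (1+α)^(1 + k - 1) * ((1 + α) ^ (m - (1+k) + 1) - 1)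
        = α * (1+α)^m - α * (1+α)^k := by
      intro k hk
      simp only [Finset.mem_range] at hk
      have e1 : 1 + k - 1 = k := by omega
      have e2 : m - (1+k) + 1 = m - k := by omega
      rw [e1, e2]
      have : (1+α)^k * (1+α)^(m-k) = (1+α)^m := by
        rw [← pow_add]; congr 1; omega
      nlinarith [this]
    rw [Finset.sum_congr rfl h2, Finset.sum_sub_distrib, geo, Finset.sum_const,
      Finset.card_range, nsmul_eq_mul]
    have h : (m + 1 - 1) = m := by omega
    rw [h]
  have hsplit : ∑ i ∈ Finset.Icc 1 (2 * m), σ i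
      = (∑ i ∈ Finset.Icc 1 m, σ i) + ∑ i ∈ Finset.Icc (m+1) (2*m), σ i := by
    rw [← Finset.Ico_add_one_right_eq_Icc, ← Finset.Ico_add_one_right_eq_Icc, ← Finset.Ico_add_one_right_eq_Icc,
      ← Finset.sum_Ico_consecutive _ (by omega : 1 ≤ m + 1) (by omega : m + 1 ≤ 2*m + 1)]
  rw [hsplit, key1, key2, key4]
  ring
end

section
/- Let a(i,l,n) be the number of independent sets of size l in the path graph on {1,...,n} containing vertex i, and let i ≤ ⌈n/2⌉ - 1. Then a(i,l,n) = a(i+1,l,n) for l ≤ i; a(i,l,n) > a(i+1,l,n) for odd i and i < l ≤ ⌈n/2⌉; and a(i,l,n) < a(i+1,l,n) for even i and i < l ≤ ⌈n/2⌉. -/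
/-!
Let `aDiff i l n = a i l n - a (i + 1) l n`. Among the independent `(l+1)`-sets of the path on
`{1,…,n+2}` through `i+1`, those avoiding `i+3` correspond to those through `i+2` avoiding `i`
(slide the vertex `i+1` to `i+2`), while the sets through both `j` and `j+2` correspond to the
independent `l`-sets of the path on `{1,…,n}` through `j` (delete the vertices `j+1, j+2` and close
the gap). Comparing the sets through `i+1` with those through `i+2` gives
`aDiff (i+1) (l+1) (n+2) = - aDiff i l n`. Iterating, `aDiff i l n` vanishes when `l ≤ i`
(as no set of size `0` contains a vertex), and equals `(-1)^(i+1) a 1 (l-i) (n-2i)` when `i ≤ l`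
(as no set contains the vertex `0`); the last count is positive, witnessed by `{1, 3, 5, …}`.
-/

/-- `a i l n` is the number of independent sets of size `l` in the path graph
on `{1,…,n}` (no two consecutive integers) that contain vertex `i`. -/
def a (i l n : ℕ) : ℕ :=
  ((Finset.Icc 1 n).powerset.filter
    (fun S => S.card = l ∧ i ∈ S ∧ ∀ x ∈ S, x + 1 ∉ S)).card

open Finset

def IsPathIndep (S : Finset ℕ) : Prop := ∀ x ∈ S, x + 1 ∉ S

instance : DecidablePred IsPathIndep := fun S => by
  unfold IsPathIndep; infer_instance

def pathIndepSets (l n : ℕ) : Finset (Finset ℕ) :=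
  (Icc 1 n).powerset.filter (fun S => #S = l ∧ IsPathIndep S)

lemma mem_pathIndepSets {S : Finset ℕ} {l n : ℕ} :
    S ∈ pathIndepSets l n ↔ S ⊆ Icc 1 n ∧ #S = l ∧ IsPathIndep S := by
  rw [pathIndepSets, mem_filter, mem_powerset]

lemma a_eq_card_filter (i l n : ℕ) : a i l n = #{S ∈ pathIndepSets l n | i ∈ S} := by
  rw [a, pathIndepSets, filter_filter]
  congr 1
  refine filter_congr fun S _ => ?_
  rw [IsPathIndep]
  tauto

lemma a_eq_card_filter_add_card_filter (i j l n : ℕ) :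
    a i l n =
      #{S ∈ pathIndepSets l n | i ∈ S ∧ j ∈ S} + #{S ∈ pathIndepSets l n | i ∈ S ∧ j ∉ S} := by
  rw [a_eq_card_filter, ← card_filter_add_card_filter_not (fun S => j ∈ S), filter_filter,
    filter_filter]

lemma a_vertex_zero (l n : ℕ) : a 0 l n = 0 := by
  rw [a_eq_card_filter, card_eq_zero, filter_eq_empty_iff]
  intro S hS h0
  have := mem_Icc.mp ((mem_pathIndepSets.mp hS).1 h0)
  omega

lemma a_size_zero (i n : ℕ) : a i 0 n = 0 := by
  rw [a_eq_card_filter, card_eq_zero, filter_eq_empty_iff]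
  intro S hS hi
  rw [card_eq_zero.mp (mem_pathIndepSets.mp hS).2.1] at hi
  exact notMem_empty i hi

lemma a_one_pos {l n : ℕ} (hl : 1 ≤ l) (hn : 2 * l ≤ n + 1) : 0 < a 1 l n := by
  rw [a_eq_card_filter, card_pos]
  have hodd : Function.Injective (fun k : ℕ => 2 * k + 1) := fun x y h => by
    simp only at h; omega
  refine ⟨(range l).image (fun k => 2 * k + 1), mem_filter.mpr
    ⟨mem_pathIndepSets.mpr ⟨?_, by rw [card_image_of_injective _ hodd, card_range], ?_⟩, ?_⟩⟩
  · intro x hx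
    obtain ⟨k, hk, rfl⟩ := mem_image.mp hx
    rw [mem_range] at hk
    rw [mem_Icc]
    omega
  · intro x hx hx1
    obtain ⟨k, -, rfl⟩ := mem_image.mp hx
    obtain ⟨k', -, h⟩ := mem_image.mp hx1
    omega
  · exact mem_image.mpr ⟨0, mem_range.mpr hl, rfl⟩

lemma IsPathIndep.map_swap {S : Finset ℕ} (hS : IsPathIndep S) {i : ℕ} (hi : i ∉ S)
    (hi3 : i + 3 ∉ S) :
    IsPathIndep (S.map (Equiv.swap (i + 1) (i + 2)).toEmbedding) := by
  intro x hx hx1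
  simp only [mem_map_equiv, Equiv.symm_swap, Equiv.swap_apply_def] at hx hx1
  split_ifs at hx hx1 <;> grind [IsPathIndep]

lemma card_filter_slide {i l n : ℕ} (hn : i + 2 ≤ n) :
    #{S ∈ pathIndepSets l n | i + 1 ∈ S ∧ i + 3 ∉ S} =
      #{S ∈ pathIndepSets l n | i + 2 ∈ S ∧ i ∉ S} := by
  set σ := Equiv.swap (i + 1) (i + 2)
  have hσσ : ∀ S : Finset ℕ, (S.map σ.toEmbedding).map σ.toEmbedding = S := fun S => by
    ext x; simp [σ]
  have hmaps : ∀ S ∈ pathIndepSets l n, i ∉ S → i + 3 ∉ S →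
      S.map σ.toEmbedding ∈ pathIndepSets l n := by
    intro S hS hi hi3
    obtain ⟨hsub, hcard, hind⟩ := mem_pathIndepSets.mp hS
    refine mem_pathIndepSets.mpr ⟨fun x hx => ?_, by rw [card_map, hcard], hind.map_swap hi hi3⟩
    rw [mem_map_equiv, Equiv.symm_swap] at hx
    have := mem_Icc.mp (hsub hx)
    rw [Equiv.swap_apply_def] at this
    rw [mem_Icc]
    split_ifs at this <;> omega
  refine card_nbij' (·.map σ.toEmbedding) (·.map σ.toEmbedding) ?_ ?_
    (fun S _ => hσσ S) (fun S _ => hσσ S)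
  · intro S hS
    simp only [coe_filter, Set.mem_ofPred_eq] at hS ⊢
    obtain ⟨hS, h1, h3⟩ := hS
    have hi : i ∉ S := fun h => (mem_pathIndepSets.mp hS).2.2 i h h1
    refine ⟨hmaps S hS hi h3, ?_, ?_⟩ <;>
      simp [σ, mem_map_equiv, Equiv.swap_apply_def, h1, hi]
  · intro S hS
    simp only [coe_filter, Set.mem_ofPred_eq] at hS ⊢
    obtain ⟨hS, h2, h0⟩ := hS
    have h3 : i + 3 ∉ S := (mem_pathIndepSets.mp hS).2.2 (i + 2) h2
    refine ⟨hmaps S hS h0 h3, ?_, ?_⟩ <;>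
      simp [σ, mem_map_equiv, Equiv.swap_apply_def, h2, h3]

def gapAfter (j x : ℕ) : ℕ := if x ≤ j then x else x + 2

section gapAfter
variable {j x y : ℕ}

lemma gapAfter_injective (j : ℕ) : Function.Injective (gapAfter j) := fun x y h => by
  unfold gapAfter at h; split_ifs at h <;> omega

lemma gapAfter_ne_succ : gapAfter j x ≠ j + 1 := by unfold gapAfter; split_ifs <;> omega

lemma gapAfter_ne_add_two : gapAfter j x ≠ j + 2 := by unfold gapAfter; split_ifs <;> omega

lemma gapAfter_succ (h : x ≠ j) : gapAfter j (x + 1) = gapAfter j x + 1 := by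
  unfold gapAfter; split_ifs <;> omega

lemma exists_gapAfter_eq (h1 : y ≠ j + 1) (h2 : y ≠ j + 2) : ∃ x, gapAfter j x = y :=
  ⟨if y ≤ j then y else y - 2, by unfold gapAfter; split_ifs <;> omega⟩

lemma gapAfter_mem_Icc {n : ℕ} (hj : j ≤ n) : gapAfter j x ∈ Icc 1 (n + 2) ↔ x ∈ Icc 1 n := by
  unfold gapAfter; simp only [mem_Icc]; split_ifs <;> omega

end gapAfter

lemma IsPathIndep.preimage_gapAfter {S : Finset ℕ} (hS : IsPathIndep S) {j : ℕ}
    (hj : j + 2 ∈ S) :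
    IsPathIndep (S.preimage (gapAfter j) (gapAfter_injective j).injOn) := by
  intro x hx hx1
  rw [mem_preimage] at hx hx1
  by_cases hxj : x = j
  · subst hxj
    exact hS _ hj (by simpa [gapAfter] using hx1)
  · exact hS _ hx (gapAfter_succ hxj ▸ hx1)

lemma IsPathIndep.insert_image_gapAfter {T : Finset ℕ} (hT : IsPathIndep T) {j : ℕ}
    (hj : j ∈ T) :
    IsPathIndep (insert (j + 2) (T.image (gapAfter j))) := by
  intro y hy hy1
  simp only [mem_insert, mem_image] at hy hy1
  rcases hy with rfl | ⟨x, hx, rfl⟩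
  · rcases hy1 with h | ⟨x, hx, h⟩
    · omega
    · have : x = j + 1 := gapAfter_injective j (by rw [h]; simp [gapAfter])
      exact hT j hj (this ▸ hx)
  · rcases hy1 with h | ⟨x', hx', h⟩
    · exact gapAfter_ne_succ (by omega : gapAfter j x = j + 1)
    · by_cases hxj : x = j
      · subst hxj
        exact gapAfter_ne_succ (by simpa [gapAfter] using h)
      · rw [← gapAfter_succ hxj] at h
        exact hT x hx (gapAfter_injective j h ▸ hx')

lemma card_insert_image_gapAfter (j : ℕ) (T : Finset ℕ) :
    #(insert (j + 2) (T.image (gapAfter j))) = #T + 1 := by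
  rw [card_insert_of_notMem, card_image_of_injective _ (gapAfter_injective j)]
  simp only [mem_image, not_exists, not_and]
  exact fun _ _ => gapAfter_ne_add_two

lemma preimage_insert_image_gapAfter (j : ℕ) (T : Finset ℕ) :
    (insert (j + 2) (T.image (gapAfter j))).preimage (gapAfter j) (gapAfter_injective j).injOn =
      T := by
  ext x
  simp [gapAfter_ne_add_two, (gapAfter_injective j).eq_iff]

lemma insert_image_preimage_gapAfter {S : Finset ℕ} (hS : IsPathIndep S) {j : ℕ} (hj : j ∈ S)
    (hj2 : j + 2 ∈ S) :
    insert (j + 2) ((S.preimage (gapAfter j) (gapAfter_injective j).injOn).image (gapAfter j)) =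
      S := by
  ext y
  simp only [mem_insert, mem_image, mem_preimage]
  constructor
  · rintro (rfl | ⟨x, hx, rfl⟩)
    exacts [hj2, hx]
  · intro hy
    by_cases h2 : y = j + 2
    · exact Or.inl h2
    · have h1 : y ≠ j + 1 := by rintro rfl; exact hS j hj hy
      obtain ⟨x, rfl⟩ := exists_gapAfter_eq h1 h2
      exact Or.inr ⟨x, hy, rfl⟩

lemma card_filter_contract (j l n : ℕ) :
    #{S ∈ pathIndepSets (l + 1) (n + 2) | j ∈ S ∧ j + 2 ∈ S} = a j l n := by
  rw [a_eq_card_filter]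
  refine card_nbij' (fun S => S.preimage (gapAfter j) (gapAfter_injective j).injOn)
    (fun T => insert (j + 2) (T.image (gapAfter j))) ?_ ?_ ?_ ?_
  · intro S hS
    simp only [coe_filter, Set.mem_ofPred_eq] at hS ⊢
    obtain ⟨hS, hj, hj2⟩ := hS
    obtain ⟨hsub, hcard, hind⟩ := mem_pathIndepSets.mp hS
    have hjn : j ≤ n := by have := mem_Icc.mp (hsub hj2); omega
    refine ⟨mem_pathIndepSets.mpr ⟨fun x hx => ?_, ?_, hind.preimage_gapAfter hj2⟩, ?_⟩
    · exact (gapAfter_mem_Icc hjn).mp (hsub (mem_preimage.mp hx))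
    · rw [← insert_image_preimage_gapAfter hind hj hj2, card_insert_image_gapAfter] at hcard
      omega
    · rw [mem_preimage]
      simpa [gapAfter] using hj
  · intro T hT
    simp only [coe_filter, Set.mem_ofPred_eq] at hT ⊢
    obtain ⟨hT, hj⟩ := hT
    obtain ⟨hsub, hcard, hind⟩ := mem_pathIndepSets.mp hT
    have hjn : j ≤ n := (mem_Icc.mp (hsub hj)).2
    refine ⟨mem_pathIndepSets.mpr ⟨?_, by rw [card_insert_image_gapAfter, hcard],
      hind.insert_image_gapAfter hj⟩, ?_, mem_insert_self _ _⟩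
    · intro y hy
      rcases mem_insert.mp hy with rfl | hy
      · rw [mem_Icc]; omega
      · obtain ⟨x, hx, rfl⟩ := mem_image.mp hy
        exact (gapAfter_mem_Icc hjn).mpr (hsub hx)
    · exact mem_insert_of_mem (mem_image.mpr ⟨j, hj, by simp [gapAfter]⟩)
  · intro S hS
    simp only [coe_filter, Set.mem_ofPred_eq] at hS
    exact insert_image_preimage_gapAfter (mem_pathIndepSets.mp hS.1).2.2 hS.2.1 hS.2.2
  · intro T _
    exact preimage_insert_image_gapAfter j T

lemma a_add_a_eq {i : ℕ} (l : ℕ) {n : ℕ} (hi : i ≤ n) :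
    a (i + 1) (l + 1) (n + 2) + a i l n = a (i + 2) (l + 1) (n + 2) + a (i + 1) l n := by
  have hleft := a_eq_card_filter_add_card_filter (i + 1) (i + 3) (l + 1) (n + 2)
  have hright := a_eq_card_filter_add_card_filter (i + 2) i (l + 1) (n + 2)
  rw [card_filter_contract] at hleft
  rw [filter_congr (fun S _ => and_comm), card_filter_contract,
    ← card_filter_slide (by omega : i + 2 ≤ n + 2)] at hright
  rw [hleft, hright]
  ring

def aDiff (i l n : ℕ) : ℤ := a i l n - a (i + 1) l n

lemma aDiff_succ {i : ℕ} (l : ℕ) {n : ℕ} (hi : i ≤ n) :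
    aDiff (i + 1) (l + 1) (n + 2) = -aDiff i l n := by
  have := a_add_a_eq l hi
  change (a (i + 1) (l + 1) (n + 2) : ℤ) - a (i + 2) (l + 1) (n + 2) =
    -(a i l n - a (i + 1) l n)
  omega

lemma aDiff_add {i : ℕ} (l : ℕ) {n : ℕ} (hi : i ≤ n) (m : ℕ) :
    aDiff (i + m) (l + m) (n + 2 * m) = (-1) ^ m * aDiff i l n := by
  induction m with
  | zero => simp
  | succ m ih =>
    rw [← add_assoc, ← add_assoc, mul_add_one, ← add_assoc, aDiff_succ _ (by omega), ih, pow_succ]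
    ring

lemma aDiff_eq_zero {i l n : ℕ} (hl : l ≤ i) (hn : i + l ≤ n) : aDiff i l n = 0 := by
  obtain ⟨i, rfl⟩ := Nat.exists_eq_add_of_le' hl
  obtain ⟨n, rfl⟩ := Nat.exists_eq_add_of_le' (by omega : 2 * l ≤ n)
  have h := aDiff_add 0 (by omega : i ≤ n) l
  rw [zero_add] at h
  rw [h, aDiff, a_size_zero, a_size_zero, sub_self, mul_zero]

lemma aDiff_eq_neg_one_pow_mul {i l n : ℕ} (hl : i ≤ l) (hn : 2 * i ≤ n) :
    aDiff i l n = (-1) ^ (i + 1) * a 1 (l - i) (n - 2 * i) := by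
  obtain ⟨l, rfl⟩ := Nat.exists_eq_add_of_le' hl
  obtain ⟨n, rfl⟩ := Nat.exists_eq_add_of_le' hn
  have h := aDiff_add l (Nat.zero_le n) i
  rw [zero_add] at h
  rw [h, aDiff, a_vertex_zero, Nat.add_sub_cancel, Nat.add_sub_cancel]
  ring

/-- comparison of a(i,l,n) and a(i+1,l,n) for i ≤ ⌈n/2⌉ - 1
(note ⌈n/2⌉ = (n+1)/2 with natural division). -/
theorem stmt9 (n i : ℕ) (hi : i ≤ (n + 1) / 2 - 1) :
    (∀ l, l ≤ i → a i l n = a (i + 1) l n) ∧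
    (Odd i → ∀ l, i < l → l ≤ (n + 1) / 2 → a (i + 1) l n < a i l n) ∧
    (Even i → ∀ l, i < l → l ≤ (n + 1) / 2 → a i l n < a (i + 1) l n) := by
  have hn : 2 * i ≤ n := by omega
  have hdiff : ∀ l, i < l → l ≤ (n + 1) / 2 →
      aDiff i l n = (-1) ^ (i + 1) * a 1 (l - i) (n - 2 * i) ∧ 0 < a 1 (l - i) (n - 2 * i) :=
    fun l hil hl => ⟨aDiff_eq_neg_one_pow_mul hil.le hn,
      a_one_pos (l := l - i) (n := n - 2 * i) (by omega) (by omega)⟩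
  refine ⟨fun l hl => ?_, fun hodd l hil hl => ?_, fun heven l hil hl => ?_⟩
  · have := aDiff_eq_zero (n := n) hl (by omega)
    unfold aDiff at this
    omega
  · obtain ⟨h, hpos⟩ := hdiff l hil hl
    rw [aDiff, hodd.add_one.neg_one_pow] at h
    omega
  · obtain ⟨h, hpos⟩ := hdiff l hil hl
    rw [aDiff, heven.add_one.neg_one_pow] at h
    omega
end

section
/- For each β ≥ 1 and σ > 0, the polynomial λ^{β+1} - λ^β - σ has a unique positive real root λ_0, and λ_0 strictly exceeds the modulus of every other complex root. -/
/-!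
On `[1, ∞)` the map `g x = x ^ (n + 1) - x ^ n = x ^ n (x - 1)` increases strictly from `0`, and it is
nonpositive on `[0, 1]`; so `g x = σ > 0` has exactly one positive solution `λ₀`, found by the
intermediate value theorem. A complex root `z` satisfies `‖z‖ ^ (n + 1) = ‖z ^ n + σ‖ ≤ ‖z‖ ^ n + σ`,
i.e. `g ‖z‖ ≤ g λ₀`, hence `‖z‖ ≤ λ₀`. If `‖z‖ = λ₀`, the triangle inequality is an equality, which
forces `z ^ n` onto the positive real axis, so `z ^ n = λ₀ ^ n` and then `z = (z ^ n + σ) / z ^ n = λ₀`.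
-/

open Set

section PowSuccSubPow

variable {n : ℕ} {σ : ℝ}

theorem pow_succ_sub_pow_eq_mul {R : Type*} [CommRing R] (x : R) (n : ℕ) :
    x ^ (n + 1) - x ^ n = x ^ n * (x - 1) := by
  ring

theorem strictMonoOn_pow_succ_sub_pow (n : ℕ) :
    StrictMonoOn (fun x : ℝ => x ^ (n + 1) - x ^ n) (Ici 1) := by
  intro a ha b _ hab
  have ha : (1 : ℝ) ≤ a := ha
  have hpow : a ^ n ≤ b ^ n := pow_le_pow_left₀ (by linarith) hab.le n
  have hpos : 0 < a ^ n := pow_pos (by linarith) n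
  simp only [pow_succ_sub_pow_eq_mul]
  calc a ^ n * (a - 1) < a ^ n * (b - 1) := by gcongr
    _ ≤ b ^ n * (b - 1) := by gcongr; linarith

theorem one_lt_of_pow_succ_sub_pow_pos {x : ℝ} (hx : 0 ≤ x) (h : 0 < x ^ (n + 1) - x ^ n) :
    1 < x := by
  by_contra! hx1
  rw [pow_succ_sub_pow_eq_mul] at h
  nlinarith [pow_nonneg hx n]

theorem exists_pow_succ_sub_pow_eq (n : ℕ) (hσ : 0 ≤ σ) :
    ∃ x ∈ Icc 1 (1 + σ), x ^ (n + 1) - x ^ n = σ := by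
  have hle : (1 : ℝ) ≤ 1 + σ := by linarith
  have hright : σ ≤ (1 + σ) ^ (n + 1) - (1 + σ) ^ n := by
    rw [pow_succ_sub_pow_eq_mul, add_sub_cancel_left]
    nlinarith [one_le_pow₀ (n := n) hle]
  refine intermediate_value_Icc hle (by fun_prop) ⟨?_, hright⟩
  simpa using hσ

theorem Complex.eq_norm_of_norm_add_ofReal_eq {w : ℂ} {c : ℝ} (hc : 0 < c)
    (h : ‖w + c‖ = ‖w‖ + c) : w = ‖w‖ := by
  have hc' : ‖(c : ℂ)‖ = c := by simp [hc.le]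
  have hray : SameRay ℝ w c := sameRay_iff_norm_add.mpr (by rw [h, hc'])
  have hsmul := hray.norm_smul_eq
  rw [hc', Complex.real_smul, Complex.real_smul] at hsmul
  exact mul_left_cancel₀ (Complex.ofReal_ne_zero.mpr hc.ne') (by linear_combination -hsmul)

theorem Complex.norm_le_of_pow_succ_sub_pow_eq {lam : ℝ} (hlam : 1 ≤ lam)
    (hroot : lam ^ (n + 1) - lam ^ n = σ) {z : ℂ} (hz : z ^ (n + 1) - z ^ n = σ) :
    ‖z‖ ≤ lam := by
  have hσ : 0 ≤ σ := by
    rw [← hroot, pow_succ_sub_pow_eq_mul]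
    exact mul_nonneg (pow_nonneg (by linarith) n) (by linarith)
  have hnorm : ‖z‖ ^ (n + 1) - ‖z‖ ^ n ≤ σ := by
    have := norm_add_le (z ^ n) (σ : ℂ)
    rw [← sub_eq_iff_eq_add'.mp hz] at this
    simp only [norm_pow, Complex.norm_real, Real.norm_eq_abs] at this
    rwa [abs_of_nonneg hσ, ← sub_le_iff_le_add'] at this
  by_contra! hlt
  linarith [strictMonoOn_pow_succ_sub_pow n hlam (hlam.trans hlt.le) hlt]

theorem Complex.eq_of_pow_succ_sub_pow_eq_of_norm_eq (hσ : 0 < σ) {lam : ℝ}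
    (hroot : lam ^ (n + 1) - lam ^ n = σ) {z : ℂ} (hz : z ^ (n + 1) - z ^ n = σ)
    (hnorm : ‖z‖ = lam) : z = lam := by
  have hlam : 0 < lam := by
    have := one_lt_of_pow_succ_sub_pow_pos (hnorm ▸ norm_nonneg z) (hroot ▸ hσ)
    linarith
  have hz' : z ^ (n + 1) = z ^ n + σ := sub_eq_iff_eq_add'.mp hz
  have hzn : z ^ n = (lam ^ n : ℝ) := by
    have h := Complex.eq_norm_of_norm_add_ofReal_eq (w := z ^ n) hσ (by
      rw [← hz', norm_pow, norm_pow, hnorm]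
      linarith)
    rwa [norm_pow, hnorm] at h
  have hrootC : (lam : ℂ) ^ (n + 1) - (lam : ℂ) ^ n = σ := by exact_mod_cast hroot
  have hmul : z * (lam ^ n : ℝ) = lam * (lam ^ n : ℝ) := by
    rw [← hzn, ← pow_succ', hz', hzn]
    push_cast
    linear_combination -hrootC
  exact mul_right_cancel₀ (by exact_mod_cast (pow_pos hlam n).ne') hmul

end PowSuccSubPow

theorem stmt12_general (β : ℕ) (σ : ℝ) (hσ : 0 < σ) :
    ∃ lam0 : ℝ, 0 < lam0 ∧ lam0 ^ (β + 1) - lam0 ^ β - σ = 0 ∧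
      (∀ x : ℝ, 0 < x → x ^ (β + 1) - x ^ β - σ = 0 → x = lam0) ∧
      (∀ z : ℂ, z ^ (β + 1) - z ^ β - (σ : ℂ) = 0 → z ≠ (lam0 : ℂ) →
        ‖z‖ < lam0) := by
  obtain ⟨lam0, ⟨hlam1, -⟩, hroot⟩ := exists_pow_succ_sub_pow_eq β hσ.le
  refine ⟨lam0, by linarith, sub_eq_zero.mpr hroot, fun x hx hxroot => ?_,
    fun z hz hne => ?_⟩
  · rw [sub_eq_zero] at hxroot
    have hx1 := one_lt_of_pow_succ_sub_pow_pos hx.le (hxroot ▸ hσ)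
    exact (strictMonoOn_pow_succ_sub_pow β).injOn hx1.le hlam1 (hxroot.trans hroot.symm)
  · rw [sub_eq_zero] at hz
    refine (Complex.norm_le_of_pow_succ_sub_pow_eq hlam1 hroot hz).lt_of_ne fun hnorm => ?_
    exact hne (Complex.eq_of_pow_succ_sub_pow_eq_of_norm_eq hσ hroot hz hnorm)

/-- for β ≥ 1 and σ > 0, the polynomial λ^{β+1} - λ^β - σ has a
unique positive real root λ₀, which strictly exceeds the modulus of every
other complex root. -/
theorem stmt12 (β : ℕ) (hβ : 1 ≤ β) (σ : ℝ) (hσ : 0 < σ) :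
    ∃ lam0 : ℝ, 0 < lam0 ∧ lam0 ^ (β + 1) - lam0 ^ β - σ = 0 ∧
      (∀ x : ℝ, 0 < x → x ^ (β + 1) - x ^ β - σ = 0 → x = lam0) ∧
      (∀ z : ℂ, z ^ (β + 1) - z ^ β - (σ : ℂ) = 0 → z ≠ (lam0 : ℂ) →
        ‖z‖ < lam0) :=
  stmt12_general β σ hσ
end

section
/- Let β ≥ 1, σ > 0, and let λ_0,...,λ_β be the (distinct) roots of λ^{β+1} - λ^β - σ = 0. Then the sequence Z_i defined by Z_i = 1 for i ≤ 0, Z_i = 1 + iσ for 1 ≤ i ≤ β+1, Z_i = Z_{i-1} + σ Z_{i-β-1} for i ≥ β+2, satisfies Z_i = Σ_{j=0}^β c_j λ_j^i for all i ≥ 0, where c_j = λ_j^{β+1}/((β+1)λ_j - β). -/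
open Polynomial Finset Lagrange

/-- partial-fraction expansion of the normalization constants:
if λ_0,…,λ_β are the distinct roots of λ^{β+1} - λ^β - σ = 0, then
Z_i = Σ_j c_j λ_j^i with c_j = λ_j^{β+1}/((β+1)λ_j - β). -/
theorem stmt13 (β : ℕ) (hβ : 1 ≤ β) (σ : ℝ) (hσ : 0 < σ)
    (lam : Fin (β + 1) → ℂ) (hinj : Function.Injective lam)
    (hroot : ∀ j, lam j ^ (β + 1) - lam j ^ β - (σ : ℂ) = 0)
    (Z : ℕ → ℝ)
    (hZsmall : ∀ i, i ≤ β + 1 → Z i = 1 + i * σ)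
    (hZlarge : ∀ i, β + 2 ≤ i → Z i = Z (i - 1) + σ * Z (i - β - 1)) :
    ∀ i : ℕ, (Z i : ℂ) =
      ∑ j, (lam j ^ (β + 1) / ((β + 1) * lam j - β)) * lam j ^ i := by
  classical
  have hσ0 : (σ : ℂ) ≠ 0 := by exact_mod_cast hσ.ne'
  have hlam0 : ∀ j, lam j ≠ 0 := by
    intro j h
    have h0 := hroot j
    rw [h, zero_pow (by omega : β + 1 ≠ 0), zero_pow (by omega : β ≠ 0)] at h0
    simp at h0
    exact hσ0 (by exact_mod_cast h0)
  have hinjOn : Set.InjOn lam (Finset.univ : Finset (Fin (β + 1))) :=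
    fun a _ b _ h => hinj h
  have hcard : (Finset.univ : Finset (Fin (β + 1))).card = β + 1 := by simp
  set D : Fin (β + 1) → ℂ := fun j => ∏ m ∈ Finset.univ.erase j, (lam j - lam m) with hD
  have hDne : ∀ j, D j ≠ 0 := by
    intro j
    rw [hD]
    refine Finset.prod_ne_zero_iff.2 fun m hm => ?_
    have : m ≠ j := (Finset.mem_erase.1 hm).1
    exact sub_ne_zero.2 fun h => this (hinj h.symm)
  -- the polynomial p and its identification with the nodal polynomial
  set p : ℂ[X] := X ^ (β + 1) - (X ^ β + C (σ : ℂ)) with hp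
  have hqdeg : (X ^ β + C (σ : ℂ)).degree < ((β + 1 : ℕ) : WithBot ℕ) := by
    refine lt_of_le_of_lt (degree_add_le _ _) (max_lt ?_ ?_)
    · rw [degree_X_pow]; exact_mod_cast Nat.lt_succ_self β
    · exact lt_of_le_of_lt degree_C_le (by exact_mod_cast Nat.cast_pos.2 (Nat.succ_pos β))
  have hpmonic : p.Monic := monic_X_pow_sub hqdeg
  have hpdeg : p.degree = (β + 1 : ℕ) := by
    rw [hp, degree_sub_eq_left_of_degree_lt (by rw [degree_X_pow]; exact hqdeg), degree_X_pow]
  have hpnodal : p = nodal Finset.univ lam := by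
    refine Polynomial.eq_of_degree_sub_lt_of_eval_index_eq _ hinjOn ?_ ?_
    · rw [hcard]
      have hnd : (nodal Finset.univ lam).degree = ((β + 1 : ℕ) : WithBot ℕ) := by
        rw [degree_nodal, hcard]
      refine lt_of_lt_of_le (degree_sub_lt (by rw [hpdeg, hnd]) hpmonic.ne_zero ?_) ?_
      · rw [hpmonic.leadingCoeff, (nodal_monic).leadingCoeff]
      · rw [hpdeg]
    · intro i _
      rw [eval_nodal_at_node (Finset.mem_univ i)]
      have := hroot i
      simp only [hp, eval_sub, eval_add, eval_pow, eval_X, eval_C]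
      linear_combination this
  -- D j in terms of the derivative of p
  have hDeval : ∀ j, D j = (β + 1) * lam j ^ β - β * lam j ^ (β - 1) := by
    intro j
    have h1 : D j = eval (lam j) (derivative (nodal Finset.univ lam)) := by
      rw [eval_nodal_derivative_eval_node_eq (Finset.mem_univ j), eval_nodal, hD]
    rw [h1, ← hpnodal, hp]
    simp [derivative_X_pow]
    try ring
  have hAne : ∀ j, ((β : ℂ) + 1) * lam j - β ≠ 0 := by
    intro j h
    apply hDne j
    rw [hDeval j]
    have hpow : lam j ^ β = lam j ^ (β - 1) * lam j := by
      rw [← pow_succ]; congr 1; omega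
    calc ((β : ℂ) + 1) * lam j ^ β - β * lam j ^ (β - 1)
        = lam j ^ (β - 1) * ((((β : ℂ) + 1) * lam j - β)) + ((β:ℂ)+1) * lam j ^ β
          - ((β:ℂ)+1) * (lam j ^ (β-1) * lam j) := by ring
      _ = 0 := by rw [h, ← hpow]; ring
  -- c j rewritten
  have hc : ∀ j, lam j ^ (β + 1) / (((β : ℂ) + 1) * lam j - β) = lam j ^ (2 * β) * (D j)⁻¹ := by
    intro j
    rw [hDeval j]
    have hfac : ((β:ℂ) + 1) * lam j ^ β - β * lam j ^ (β - 1)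
        = lam j ^ (β - 1) * (((β : ℂ) + 1) * lam j - β) := by
      have hpow : lam j ^ β = lam j ^ (β - 1) * lam j := by
        rw [← pow_succ]; congr 1; omega
      rw [hpow]; ring
    rw [hfac, mul_inv, ← mul_assoc]
    have h2 : lam j ^ (2 * β) * (lam j ^ (β - 1))⁻¹ = lam j ^ (β + 1) := by
      rw [mul_inv_eq_iff_eq_mul₀ (pow_ne_zero _ (hlam0 j)), ← pow_add]
      congr 1; omega
    rw [h2, div_eq_mul_inv]
  -- the key Lagrange identity
  set S : ℕ → ℂ := fun k => ∑ j, lam j ^ k * (D j)⁻¹ with hS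
  have hSval : ∀ k, k ≤ β → S k = if k = β then 1 else 0 := by
    intro k hk
    have hdeg : ((X : ℂ[X]) ^ k).degree < (Finset.univ : Finset (Fin (β + 1))).card := by
      rw [hcard, degree_X_pow]; exact_mod_cast Nat.lt_succ_of_le hk
    have hint := Lagrange.eq_interpolate (f := (X : ℂ[X]) ^ k) hinjOn hdeg
    have hco := congrArg (fun q => Polynomial.coeff q β) hint
    simp only [coeff_X_pow, interpolate_apply, Polynomial.finset_sum_coeff, coeff_C_mul] at hco
    rw [hS]
    have hbasis : ∀ j : Fin (β + 1), (Lagrange.basis Finset.univ lam j).coeff β = (D j)⁻¹ := by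
      intro j
      have hnd : (Lagrange.basis Finset.univ lam j).natDegree = β := by
        rw [natDegree_basis hinjOn (Finset.mem_univ j), hcard]
        omega
      have hlc : (Lagrange.basis Finset.univ lam j).coeff β
          = (Lagrange.basis Finset.univ lam j).leadingCoeff := by
        rw [leadingCoeff, hnd]
      rw [hlc, show Lagrange.basis Finset.univ lam j
          = ∏ m ∈ Finset.univ.erase j, basisDivisor (lam j) (lam m) from rfl,
        leadingCoeff_prod, hD, ← Finset.prod_inv_distrib]
      refine Finset.prod_congr rfl fun m hm => ?_
      have hne : lam j ≠ lam m := fun h => (Finset.mem_erase.1 hm).1 (hinj h.symm)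
      rw [basisDivisor, leadingCoeff_mul, leadingCoeff_C, (monic_X_sub_C (lam m)).leadingCoeff,
        mul_one]
    calc ∑ j, lam j ^ k * (D j)⁻¹ = ∑ j, eval (lam j) ((X:ℂ[X])^k) *
          (Lagrange.basis Finset.univ lam j).coeff β := by
          refine Finset.sum_congr rfl fun j _ => ?_
          rw [hbasis j, eval_pow, eval_X]
      _ = if k = β then 1 else 0 := by rw [← hco]; simp [eq_comm]
  have hSrec : ∀ k, S (k + (β + 1)) = S (k + β) + σ * S k := by
    intro k
    rw [hS]
    simp only
    rw [Finset.mul_sum, ← Finset.sum_add_distrib]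
    refine Finset.sum_congr rfl fun j _ => ?_
    have h1 : lam j ^ (β + 1) = lam j ^ β + σ := by linear_combination hroot j
    have h2 : lam j ^ (k + (β + 1)) = lam j ^ k * (lam j ^ β + σ) := by rw [pow_add, h1]
    rw [h2, pow_add]
    ring
  have hS1 : ∀ m, m ≤ β → S (β + m) = 1 := by
    intro m
    induction m with
    | zero => intro _; simpa using hSval β le_rfl
    | succ m ih =>
      intro hm
      have e : β + (m + 1) = m + (β + 1) := by omega
      rw [e, hSrec m]
      rw [hSval m (by omega), if_neg (by omega)]
      have : m + β = β + m := by omega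
      rw [this, ih (by omega)]
      ring
  have hS2 : ∀ i, i ≤ β + 1 → S (2 * β + i) = 1 + i * σ := by
    intro i
    induction i with
    | zero =>
      intro _
      have e : 2 * β + 0 = β + β := by omega
      rw [e, hS1 β le_rfl]; push_cast; ring
    | succ i ih =>
      intro hi
      have e : 2 * β + (i + 1) = (β + i) + (β + 1) := by omega
      rw [e, hSrec (β + i)]
      have e2 : β + i + β = 2 * β + i := by omega
      rw [e2, ih (by omega), hS1 i (by omega)]
      push_cast
      ring
  -- main induction
  have main : ∀ i : ℕ, (Z i : ℂ) = S (2 * β + i) := by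
    intro i
    induction i using Nat.strong_induction_on with
    | _ i IH =>
      by_cases h : i ≤ β + 1
      · rw [hZsmall i h, hS2 i h]; push_cast; ring
      · have h2 : β + 2 ≤ i := by omega
        rw [hZlarge i h2]
        push_cast
        rw [IH (i - 1) (by omega), IH (i - β - 1) (by omega)]
        have e1 : 2 * β + i = (2 * β + (i - β - 1)) + (β + 1) := by omega
        rw [e1, hSrec]
        have e2 : 2 * β + (i - β - 1) + β = 2 * β + (i - 1) := by omega
        rw [e2]
  intro i
  rw [main i, hS]
  simp only
  refine Finset.sum_congr rfl fun j _ => ?_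
  rw [hc j, pow_add, ← pow_add]
  ring
end

section
/- Let β ≥ 1, σ > 0, and Z_i(σ) the sequence with Z_i = 1 for i ≤ 0, Z_i = 1+iσ for 1 ≤ i ≤ β+1, Z_i = Z_{i-1} + σZ_{i-β-1} for i ≥ β+2. Then as formal power series in x, Σ_{n≥1} (Σ_{i=1}^n Z_{i-β-1} Z_{n-i-β}) x^n = x/(1 - x - σx^{β+1})², and consequently n·Z_n(σ)·(average throughput) = σ·(d/dσ)Z_n(σ), i.e., the average per-node throughput with equal rates equals (σ/n) Z_n'(σ)/Z_n(σ). -/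
/-!
Put `u_m = Z_{m-β}`. The recursion `Z_m = Z_{m-1} + σ Z_{m-β-1}`, valid for every `m ≥ 1` once
`Z_m = 1` for `m ≤ 0`, says exactly that `U = Σ u_m x^m` is the inverse of
`P = 1 - x - σ x^(β+1)`. The inner sum `a_n = Σ_i Z_{i-β-1} Z_{n-i-β}` is the `n`-th coefficient
of `x U²`, so `A = Σ a_n x^n = x / P²`. Multiplying by `P` gives `A P = x U`, a recursion for
`a_n` which is the σ-derivative of the recursion for `Z_n`; hence `Z_n'(σ) = a_n`, and the
throughput identity is `Σ_i σ Z_{i-β-1} Z_{n-i-β} / Z_n = σ a_n / Z_n`.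
-/

open PowerSeries Finset

namespace LinearNetwork

section PowerSeries

variable {R : Type*} [CommRing R] (β : ℕ)

noncomputable def denomSeries (σ : R) : PowerSeries R := 1 - X - C σ * X ^ (β + 1)

def shiftedSeries (Z : ℤ → R) : PowerSeries R := mk fun m => Z ((m : ℤ) - β)

def convCoeff (Z : ℤ → R) (n : ℕ) : R :=
  ∑ i ∈ Icc 1 n, Z ((i : ℤ) - β - 1) * Z ((n : ℤ) - i - β)

structure IsNormalizationSeq (σ : R) (Z : ℤ → R) : Prop where
  eq_one : ∀ m : ℤ, m ≤ 0 → Z m = 1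
  recurrence : ∀ m : ℤ, 1 ≤ m → Z m = Z (m - 1) + σ * Z (m - β - 1)

variable {β}

theorem IsNormalizationSeq.of_init {σ : R} {Z : ℤ → R} (h0 : ∀ i : ℤ, i ≤ 0 → Z i = 1)
    (hsmall : ∀ i : ℤ, 1 ≤ i → i ≤ β + 1 → Z i = 1 + i * σ)
    (hlarge : ∀ i : ℤ, (β : ℤ) + 2 ≤ i → Z i = Z (i - 1) + σ * Z (i - β - 1)) :
    IsNormalizationSeq β σ Z where
  eq_one := h0
  recurrence m hm := by
    rcases le_or_gt ((β : ℤ) + 2) m with hm' | hm'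
    · exact hlarge m hm'
    have hprev : Z (m - 1) = 1 + (m - 1 : ℤ) * σ := by
      rcases hm.eq_or_lt with rfl | hm1
      · simp [h0 0 le_rfl]
      · exact hsmall _ (by omega) (by omega)
    rw [hsmall m hm (by omega), hprev, h0 _ (by omega)]
    push_cast
    ring

theorem coeff_mul_denomSeries (σ : R) (f : PowerSeries R) (n : ℕ) :
    coeff n (f * denomSeries β σ) = coeff n f - (if 1 ≤ n then coeff (n - 1) f else 0)
      - σ * (if β + 1 ≤ n then coeff (n - (β + 1)) f else 0) := by
  have : f * denomSeries β σ = f - f * X ^ 1 - C σ * (f * X ^ (β + 1)) := by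
    rw [denomSeries]; ring
  rw [this]
  simp only [map_sub, coeff_C_mul, coeff_mul_X_pow']

theorem IsNormalizationSeq.shiftedSeries_mul_denomSeries {σ : R} {Z : ℤ → R}
    (h : IsNormalizationSeq β σ Z) : shiftedSeries β Z * denomSeries β σ = 1 := by
  ext n
  rw [coeff_mul_denomSeries, coeff_one]
  simp only [shiftedSeries, coeff_mk]
  rcases Nat.lt_or_ge n 1 with hn | hn
  · obtain rfl : n = 0 := by omega
    simp [h.eq_one (-(β : ℤ)) (by omega)]
  rw [if_pos hn, if_neg (show n ≠ 0 by omega)]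
  rcases Nat.lt_or_ge n (β + 1) with hsmall | hlarge
  · rw [if_neg (by omega), h.eq_one _ (by omega), h.eq_one _ (by omega)]
    ring
  · rw [if_pos hlarge, h.recurrence ((n : ℤ) - β) (by omega)]
    have e1 : ((n - 1 : ℕ) : ℤ) - β = (n : ℤ) - β - 1 := by omega
    have e2 : ((n - (β + 1) : ℕ) : ℤ) - β = (n : ℤ) - β - β - 1 := by omega
    rw [e1, e2]
    ring

theorem convCoeff_zero (Z : ℤ → R) : convCoeff β Z 0 = 0 := by
  simp [convCoeff]

theorem mk_convCoeff (Z : ℤ → R) : PowerSeries.mk (convCoeff β Z) = X * shiftedSeries β Z ^ 2 := by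
  ext n
  rw [← pow_one (X : PowerSeries R), coeff_X_pow_mul', coeff_mk]
  rcases Nat.lt_or_ge n 1 with hn | hn
  · obtain rfl : n = 0 := by omega
    simp [convCoeff_zero]
  rw [if_pos hn, sq, coeff_mul, Finset.Nat.sum_antidiagonal_eq_sum_range_succ_mk,
    Nat.succ_eq_add_one, Nat.sub_add_cancel hn, convCoeff, ← Finset.Ico_add_one_right_eq_Icc,
    Finset.sum_Ico_eq_sum_range, Nat.add_sub_cancel]
  refine Finset.sum_congr rfl fun j hj => ?_
  have hj : j < n := Finset.mem_range.mp hj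
  simp only [shiftedSeries, coeff_mk]
  congr 2 <;> omega

theorem IsNormalizationSeq.mk_convCoeff_mul_denomSeries_sq {σ : R} {Z : ℤ → R}
    (h : IsNormalizationSeq β σ Z) : PowerSeries.mk (convCoeff β Z) * denomSeries β σ ^ 2 = X := by
  calc PowerSeries.mk (convCoeff β Z) * denomSeries β σ ^ 2
      = X * (shiftedSeries β Z * denomSeries β σ) ^ 2 := by rw [mk_convCoeff]; ring
    _ = X := by rw [h.shiftedSeries_mul_denomSeries, one_pow, mul_one]

theorem IsNormalizationSeq.convCoeff_succ {σ : R} {Z : ℤ → R} (h : IsNormalizationSeq β σ Z)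
    (n : ℕ) : convCoeff β Z (n + 1) =
      convCoeff β Z n + Z ((n : ℤ) - β) + σ * convCoeff β Z (n - β) := by
  have hmul : PowerSeries.mk (convCoeff β Z) * denomSeries β σ = X * shiftedSeries β Z := by
    rw [mk_convCoeff, ← mul_one (X * shiftedSeries β Z), ← h.shiftedSeries_mul_denomSeries]
    ring
  have hcoeff := congrArg (coeff (n + 1)) hmul
  rw [coeff_mul_denomSeries, ← pow_one (X : PowerSeries R), coeff_X_pow_mul'] at hcoeff
  simp only [coeff_mk, shiftedSeries, if_pos (Nat.le_add_left 1 n), Nat.add_sub_cancel] at hcoeff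
  have hlast : (if β + 1 ≤ n + 1 then convCoeff β Z (n + 1 - (β + 1)) else 0)
      = convCoeff β Z (n - β) := by
    split_ifs with hβn
    · rw [Nat.add_sub_add_right]
    · rw [Nat.sub_eq_zero_of_le (by omega), convCoeff_zero]
  rw [hlast] at hcoeff
  linear_combination hcoeff

end PowerSeries

variable {𝕜 : Type*} [NontriviallyNormedField 𝕜] {β : ℕ}

theorem hasDerivAt_normalizationSeq {Zf : 𝕜 → ℤ → 𝕜}
    (h : ∀ s, IsNormalizationSeq β s (Zf s)) (σ : 𝕜) (m : ℤ) :
    HasDerivAt (fun s => Zf s m) (convCoeff β (Zf σ) m.toNat) σ := by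
  suffices ∀ n : ℕ, ∀ m : ℤ, m ≤ n →
      HasDerivAt (fun s => Zf s m) (convCoeff β (Zf σ) m.toNat) σ from
    this _ m (Int.self_le_toNat m)
  intro n
  induction n with
  | zero =>
    intro m hm
    have hconst : (fun s => Zf s m) = fun _ => 1 := funext fun s => (h s).eq_one m hm
    rw [hconst, Int.toNat_of_nonpos hm, convCoeff_zero]
    exact hasDerivAt_const σ 1
  | succ n ih =>
    intro m hm
    rcases hm.lt_or_eq with hlt | rfl
    · exact ih m (by omega)
    have hfun : (fun s => Zf s ((n + 1 : ℕ) : ℤ)) = fun s => Zf s n + s * Zf s ((n : ℤ) - β) := by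
      funext s
      rw [(h s).recurrence _ (by omega)]
      congr 3 <;> omega
    have hderiv := (ih n le_rfl).add ((hasDerivAt_id' σ).mul (ih ((n : ℤ) - β) (by omega)))
    rw [hfun, Int.toNat_natCast, (h σ).convCoeff_succ]
    refine hderiv.congr_deriv ?_
    rw [Int.toNat_natCast, show ((n : ℤ) - β).toNat = n - β by omega]
    ring

end LinearNetwork

open LinearNetwork in
theorem stmt18_general (β : ℕ) (σ : ℝ)
    (Zf : ℝ → ℤ → ℝ)
    (hZ0 : ∀ s : ℝ, ∀ i : ℤ, i ≤ 0 → Zf s i = 1)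
    (hZsmall : ∀ s : ℝ, ∀ i : ℤ, 1 ≤ i → i ≤ β + 1 → Zf s i = 1 + i * s)
    (hZlarge : ∀ s : ℝ, ∀ i : ℤ, (β : ℤ) + 2 ≤ i →
      Zf s i = Zf s (i - 1) + s * Zf s (i - β - 1)) :
    (PowerSeries.mk
        (fun n : ℕ => ∑ i ∈ Finset.Icc 1 n,
          Zf σ ((i : ℤ) - β - 1) * Zf σ ((n : ℤ) - i - β))
      * (1 - X - PowerSeries.C (R := ℝ) σ * X ^ (β + 1)) ^ 2 = X) ∧
    (∀ n : ℕ, 1 ≤ n → ∀ D : ℝ, HasDerivAt (fun s => Zf s n) D σ →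
      (1 / (n : ℝ)) * ∑ i ∈ Finset.Icc 1 n,
          σ * Zf σ ((i : ℤ) - β - 1) * Zf σ ((n : ℤ) - i - β) / Zf σ n
        = (σ / n) * D / Zf σ n) := by
  have hZ : ∀ s, IsNormalizationSeq β s (Zf s) := fun s =>
    .of_init (hZ0 s) (hZsmall s) (hZlarge s)
  refine ⟨(hZ σ).mk_convCoeff_mul_denomSeries_sq, fun n _ D hD => ?_⟩
  have hDn : D = convCoeff β (Zf σ) n := by
    simpa using hD.unique (hasDerivAt_normalizationSeq hZ σ n)
  simp only [hDn, convCoeff, mul_assoc, ← Finset.mul_sum, ← Finset.sum_div]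
  ring

/-- for the normalization constants Z_i(σ) of the linear
network with equal rates, the generating function identity
Σ_{n≥1} (Σ_{i=1}^n Z_{i-β-1} Z_{n-i-β}) x^n = x/(1-x-σx^{β+1})² holds (stated
after clearing the denominator), and consequently the average per-node
throughput (1/n) Σ_{i=1}^n σ Z_{i-β-1} Z_{n-i-β} / Z_n equals
(σ/n) Z_n'(σ)/Z_n(σ). -/
theorem stmt18 (β : ℕ) (hβ : 1 ≤ β) (σ : ℝ) (hσ : 0 < σ)
    (Zf : ℝ → ℤ → ℝ)
    (hZ0 : ∀ s : ℝ, ∀ i : ℤ, i ≤ 0 → Zf s i = 1)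
    (hZsmall : ∀ s : ℝ, ∀ i : ℤ, 1 ≤ i → i ≤ β + 1 → Zf s i = 1 + i * s)
    (hZlarge : ∀ s : ℝ, ∀ i : ℤ, (β : ℤ) + 2 ≤ i →
      Zf s i = Zf s (i - 1) + s * Zf s (i - β - 1)) :
    (PowerSeries.mk
        (fun n : ℕ => ∑ i ∈ Finset.Icc 1 n,
          Zf σ ((i : ℤ) - β - 1) * Zf σ ((n : ℤ) - i - β))
      * (1 - X - PowerSeries.C (R := ℝ) σ * X ^ (β + 1)) ^ 2 = X) ∧
    (∀ n : ℕ, 1 ≤ n → ∀ D : ℝ, HasDerivAt (fun s => Zf s n) D σ →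
      (1 / (n : ℝ)) * ∑ i ∈ Finset.Icc 1 n,
          σ * Zf σ ((i : ℤ) - β - 1) * Zf σ ((n : ℤ) - i - β) / Zf σ n
        = (σ / n) * D / Zf σ n) :=
  stmt18_general β σ Zf hZ0 hZsmall hZlarge
end
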